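/- arXiv:1606.03651 — 3 statements merged into one kernel-verified Lean document; each statement's English description precedes it below -/
import Mathlib

section
/- Let X be a real-valued random variable with unbounded distribution F and Y a nonnegative random variable with distribution G, neither degenerate at zero, and let H be the distribution of XY. If (X,Y) satisfies Assumption 1 (there is a measurable function h:[0,∞)→(0,∞) such that P(X>x | Y=y) ~ h(y)P(X>x) as x→∞ uniformly in y≥0) and Assumption 2 (Ḡ(bx)=o(H̄(x)) as x→∞ for every constant b>0), then P(XY>x) ~ ∫_0^∞ h(y) F̄(x/y) G(dy) as x→∞. -/
open MeasureTheory ProbabilityTheory Filter Set Asymptotics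

noncomputable section

/-- The tail (survival) function `x ↦ P(Z > x)` of a random variable `Z`. -/
def rvTail {Ω : Type*} [MeasureSpace Ω] (Z : Ω → ℝ) (x : ℝ) : ℝ :=
  (ℙ {ω | x < Z ω}).toReal

/-- The cumulative distribution function `x ↦ P(Z ≤ x)` of a random variable `Z`. -/
def rvCdf {Ω : Type*} [MeasureSpace Ω] (Z : Ω → ℝ) (x : ℝ) : ℝ :=
  (ℙ {ω | Z ω ≤ x}).toReal

/-- The left limit of the cdf, `G(y-) = P(Z < y)`. -/
def rvCdfLeft {Ω : Type*} [MeasureSpace Ω] (Z : Ω → ℝ) (y : ℝ) : ℝ :=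
  (ℙ {ω | Z ω < y}).toReal

/-- The distribution of `Z` is unbounded (above): its tail is positive for every `x > 0`. -/
def UnboundedDist {Ω : Type*} [MeasureSpace Ω] (Z : Ω → ℝ) : Prop :=
  ∀ x > 0, 0 < rvTail Z x

/-- The support `D_Z = {y : P(Z ∈ (y - δ, y + δ)) > 0 for all δ > 0}` of the
distribution of `Z`. -/
def distSupport {Ω : Type*} [MeasureSpace Ω] (Z : Ω → ℝ) : Set ℝ :=
  {y | ∀ δ > 0, 0 < ℙ {ω | Z ω ∈ Ioo (y - δ) (y + δ)}}

/-- The distribution of `Z` belongs to the class `L(γ)`: it is unbounded above and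
`P(Z > x - t) ~ e^{γ t} P(Z > x)` as `x → ∞`, for every `t > 0`. -/
def MemLGamma {Ω : Type*} [MeasureSpace Ω] (Z : Ω → ℝ) (γ : ℝ) : Prop :=
  UnboundedDist Z ∧
    ∀ t > 0, (fun x => rvTail Z (x - t)) ~[atTop] (fun x => Real.exp (γ * t) * rvTail Z x)

/-- The tail of the two-fold convolution of the distribution of `Z` with itself. -/
def convSqTail {Ω : Type*} [MeasureSpace Ω] (Z : Ω → ℝ) (x : ℝ) : ℝ :=
  (((Measure.map Z ℙ).conv (Measure.map Z ℙ)) (Ioi x)).toReal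

/-- The distribution of `Z` belongs to the class `S(γ)`: it belongs to `L(γ)`, the
exponential moment `c = ∫ e^{γ y} dV(y)` is finite, and the tail of the two-fold
convolution satisfies `V̄*²(x) ~ 2 c V̄(x)` as `x → ∞`. -/
def MemSGamma {Ω : Type*} [MeasureSpace Ω] (Z : Ω → ℝ) (γ : ℝ) : Prop :=
  MemLGamma Z γ ∧
    Integrable (fun y => Real.exp (γ * y)) (Measure.map Z ℙ) ∧
    (fun x => convSqTail Z x) ~[atTop]
      (fun x => 2 * (∫ y, Real.exp (γ * y) ∂(Measure.map Z ℙ)) * rvTail Z x)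

open Classical in
/-- `γ / β_G`, where `β_G = sup {y : G(y) < 1}` is the right endpoint of the distribution
of `Z`, with the convention that `γ / β_G = 0` when `β_G = ∞`.
(Note that `G(y) < 1 ↔ P(Z > y) > 0`.) -/
def gammaOverBeta {Ω : Type*} [MeasureSpace Ω] (Z : Ω → ℝ) (γ : ℝ) : ℝ :=
  if BddAbove {y : ℝ | 0 < rvTail Z y} then γ / sSup {y : ℝ | 0 < rvTail Z y} else 0

/-- Assumption 2: `Ḡ(b x) = o(H̄(x))` as `x → ∞` for every constant `b > 0`, where `G` is
the distribution of `Y` and `H` is the distribution of the product `X Y`. -/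
def Assumption2 {Ω : Type*} [MeasureSpace Ω] (X Y : Ω → ℝ) : Prop :=
  ∀ b > 0, (fun x => rvTail Y (b * x)) =o[atTop] fun x => rvTail (fun ω => X ω * Y ω) x

/-- Assumption 1: `K x y` is the conditional probability `P(X > x | Y = y)`, namely for
`y` in the support of `Y` it is the limit of `P(X > x | Y ∈ (y - δ, y + δ])` as `δ → 0+`,
and for `y` outside the support it is the unconditional probability `P(X > x)` (and then
`h y = 1`); `h : [0,∞) → (0,∞)` is a measurable function such that
`P(X > x | Y = y) ~ h(y) P(X > x)` as `x → ∞`, uniformly for `y ≥ 0`. -/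
def Assumption1 {Ω : Type*} [MeasureSpace Ω] (X Y : Ω → ℝ) (h : ℝ → ℝ) (K : ℝ → ℝ → ℝ) :
    Prop :=
  Measurable h ∧ (∀ y, 0 ≤ y → 0 < h y) ∧
    (∀ y, y ∉ distSupport Y → h y = 1 ∧ ∀ x, K x y = rvTail X x) ∧
    (∀ y ∈ distSupport Y, ∀ x : ℝ,
      Tendsto
        (fun δ : ℝ => (ℙ {ω | x < X ω ∧ Y ω ∈ Ioc (y - δ) (y + δ)}).toReal /
          (ℙ {ω | Y ω ∈ Ioc (y - δ) (y + δ)}).toReal)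
        (nhdsWithin 0 (Ioi 0)) (nhds (K x y))) ∧
    ∀ ε > 0, ∀ᶠ x in atTop, ∀ y, 0 ≤ y → |K x y / (h y * rvTail X x) - 1| < ε

/-- `(X, Y)` follows a Farlie–Gumbel–Morgenstern (FGM) distribution with parameter
`θ ∈ [-1, 1]`: `P(X > x, Y > y) = F̄(x) Ḡ(y) (1 + θ F(x) G(y))` for all `x` in the
support of `X` and `y` in the support of `Y`. -/
def FGM {Ω : Type*} [MeasureSpace Ω] (X Y : Ω → ℝ) (θ : ℝ) : Prop :=
  θ ∈ Icc (-1 : ℝ) 1 ∧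
    ∀ x ∈ distSupport X, ∀ y ∈ distSupport Y,
      (ℙ {ω | x < X ω ∧ y < Y ω}).toReal =
        rvTail X x * rvTail Y y * (1 + θ * rvCdf X x * rvCdf Y y)

/-- `(X, Y)` follows a bivariate Sarmanov distribution with kernels `φ₁, φ₂` and
parameter `θ`: the joint law has density `1 + θ φ₁(x) φ₂(y)` with respect to the product
of the marginal laws, where `φ₁, φ₂` are measurable, `E φ₁(X) = E φ₂(Y) = 0` and
`1 + θ φ₁(x) φ₂(y) ≥ 0`. -/
def Sarmanov {Ω : Type*} [MeasureSpace Ω] (X Y : Ω → ℝ) (φ₁ φ₂ : ℝ → ℝ) (θ : ℝ) : Prop :=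
  Measurable φ₁ ∧ Measurable φ₂ ∧
    Integrable (fun ω => φ₁ (X ω)) ℙ ∧ Integrable (fun ω => φ₂ (Y ω)) ℙ ∧
    (∫ ω, φ₁ (X ω)) = 0 ∧ (∫ ω, φ₂ (Y ω)) = 0 ∧
    (∀ x y : ℝ, 0 ≤ y → 0 ≤ 1 + θ * φ₁ x * φ₂ y) ∧
    Measure.map (fun ω => (X ω, Y ω)) ℙ =
      ((Measure.map X ℙ).prod (Measure.map Y ℙ)).withDensity
        (fun p => ENNReal.ofReal (1 + θ * φ₁ p.1 * φ₂ p.2))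

/-- The condition `ψ(y) = lim_{δ → 0+} (∫_{y-δ}^{y+δ} φ₂(v) G(dv)) / (G(y+δ) - G(y-δ))`
for all `y` in the support of `Y`. -/
def SarmanovPsi {Ω : Type*} [MeasureSpace Ω] (Y : Ω → ℝ) (φ₂ ψ : ℝ → ℝ) : Prop :=
  ∀ y ∈ distSupport Y,
    Tendsto
      (fun δ : ℝ => (∫ v in Ioc (y - δ) (y + δ), φ₂ v ∂(Measure.map Y ℙ)) /
        (rvCdf Y (y + δ) - rvCdf Y (y - δ)))
      (nhdsWithin 0 (Ioi 0)) (nhds (ψ y))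

/-! Disintegrating the law of `(Y, X)` along `Y` gives `P(XY > x) = ∫_{y > 0} κ_y(x/y, ∞) G(dy)`,
where `κ` is the conditional law of `X` given `Y`. By the Lebesgue–Besicovitch differentiation
theorem, `κ_y(t, ∞)` is the conditional probability `P(X > t | Y = y)` of Assumption 1 for
`G`-a.e. `y`, first for rational `t` and then, by right-continuity, for all `t`. Hence, for a
large constant `M`, `κ_y(x/y, ∞) = (1 + o(1)) h(y) F̄(x/y)` uniformly in `y ≤ x/M`, and `h` is
bounded. On `y > x/M` both integrands are bounded, so that part of either integral is
`O(Ḡ(x/M)) = o(H̄(x))` by Assumption 2. -/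

open scoped Topology ENNReal

theorem Dense.nhdsWithin_Ioi_inter_neBot {α : Type*} [TopologicalSpace α] [LinearOrder α]
    [OrderTopology α] [DenselyOrdered α] [NoMaxOrder α] {s : Set α} (hs : Dense s) (x : α) :
    (𝓝[Ioi x ∩ s] x).NeBot := by
  rw [← mem_closure_iff_nhdsWithin_neBot]
  refine closure_minimal (hs.open_subset_closure_inter isOpen_Ioi) isClosed_closure ?_
  rw [closure_Ioi]
  exact self_mem_Ici

theorem le_of_forall_rat_gt_of_continuousWithinAt {f g : ℝ → ℝ} {x : ℝ}
    (hf : ContinuousWithinAt f (Ioi x) x) (hg : ContinuousWithinAt g (Ioi x) x)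
    (h : ∀ q : ℚ, x < q → f q ≤ g q) : f x ≤ g x := by
  have := (Rat.denseRange_cast (𝕜 := ℝ)).nhdsWithin_Ioi_inter_neBot x
  refine le_of_tendsto_of_tendsto (b := 𝓝[Ioi x ∩ range ((↑) : ℚ → ℝ)] x)
    (hf.mono inter_subset_left) (hg.mono inter_subset_left) ?_
  filter_upwards [self_mem_nhdsWithin] with t ⟨ht, q, hq⟩
  exact hq ▸ h q (hq ▸ ht)

theorem abs_sub_le_mul_of_abs_div_sub_one_le {a b δ : ℝ} (hb : 0 < b) (h : |a / b - 1| ≤ δ) :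
    |a - b| ≤ δ * b := by
  have hab : a - b = (a / b - 1) * b := by field_simp
  rw [hab, abs_mul, abs_of_pos hb]
  exact mul_le_mul_of_nonneg_right h hb.le

theorem setOf_lt_mul_eq_Ioi_div {x y : ℝ} (hy : 0 < y) : {u : ℝ | x < u * y} = Ioi (x / y) := by
  ext u
  exact (div_lt_iff₀ hy).symm

theorem continuousWithinAt_measureReal_Ioi (μ : Measure ℝ) [IsProbabilityMeasure μ] (x : ℝ) :
    ContinuousWithinAt (fun t => μ.real (Ioi t)) (Ioi x) x := by
  have hcdf : (fun t => μ.real (Ioi t)) = fun t => 1 - cdf μ t := by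
    ext t
    rw [cdf_eq_real, ← compl_Iic, probReal_compl_eq_one_sub measurableSet_Iic]
  rw [hcdf]
  exact (continuousWithinAt_const.sub ((cdf μ).right_continuous x)).mono Ioi_subset_Ici_self

theorem ae_toReal_eq_of_tendsto_setLIntegral_Ioc_div {μ : Measure ℝ} [IsFiniteMeasure μ]
    {f : ℝ → ℝ≥0∞} (hf : Measurable f) (h'f : ∫⁻ y, f y ∂μ ≠ ∞) :
    ∀ᵐ y ∂μ, ∀ c : ℝ, Tendsto (fun δ => (∫⁻ z in Ioc (y - δ) (y + δ), f z ∂μ).toReal /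
      (μ (Ioc (y - δ) (y + δ))).toReal) (𝓝[>] 0) (𝓝 c) → (f y).toReal = c := by
  filter_upwards [(Besicovitch.vitaliFamily μ).ae_tendsto_lintegral_div' hf h'f,
    ae_lt_top hf h'f] with y hy hfy c hc
  have hball := hy.comp (Besicovitch.tendsto_filterAt μ y)
  -- closed balls agree with `Ioc` intervals for radii avoiding the countably many atoms of `μ`
  have hatoms : {a : ℝ | 0 < μ {a}}.Countable :=
    Measure.countable_meas_pos_of_disjoint_iUnion (fun _ => measurableSet_singleton _)
      fun _ _ hab => disjoint_singleton.2 hab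
  have hdense : Dense {δ : ℝ | μ {y - δ} = 0} := by
    convert (hatoms.preimage (sub_right_injective (b := y))).dense_compl ℝ using 1
    ext δ
    simp [pos_iff_ne_zero]
  have := hdense.nhdsWithin_Ioi_inter_neBot 0
  refine tendsto_nhds_unique (l := 𝓝[Ioi 0 ∩ {δ | μ {y - δ} = 0}] 0)
    (((ENNReal.tendsto_toReal hfy.ne).comp
      (hball.mono_left (nhdsWithin_mono _ inter_subset_left))).congr' ?_)
    (hc.mono_left (nhdsWithin_mono _ inter_subset_left))
  filter_upwards [self_mem_nhdsWithin] with δ hδ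
  simp only [Function.comp, ENNReal.toReal_div, Real.closedBall_eq_Icc]
  rw [setLIntegral_congr (Ioc_ae_eq_Icc' hδ.2).symm, measure_congr (Ioc_ae_eq_Icc' hδ.2).symm]

theorem abs_setIntegral_Ioi_sub_le {G : Measure ℝ} [IsFiniteMeasure G] {u v : ℝ → ℝ}
    {a C ε : ℝ} (ha : 0 ≤ a) (hε : 0 ≤ ε) (hu : IntegrableOn u (Ioi 0) G)
    (hv : IntegrableOn v (Ioi 0) G)
    (hu_mem : ∀ᵐ y ∂G, 0 < y → u y ∈ Icc 0 C) (hv_mem : ∀ᵐ y ∂G, 0 < y → v y ∈ Icc 0 C)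
    (hnear : ∀ᵐ y ∂G, y ∈ Ioc 0 a → |v y - u y| ≤ ε * u y) :
    |(∫ y in Ioi 0, v y ∂G) - ∫ y in Ioi 0, u y ∂G|
      ≤ ε * (∫ y in Ioi 0, u y ∂G) + C * G.real (Ioi a) := by
  have hu0 : 0 ≤ᵐ[G.restrict (Ioi 0)] u := by
    filter_upwards [ae_restrict_of_ae hu_mem, ae_restrict_mem measurableSet_Ioi] with y hy hy0
    exact (hy hy0).1
  have hvu : IntegrableOn (fun y => v y - u y) (Ioi 0) G := hv.sub hu
  have hsplit : (∫ y in Ioi 0, v y ∂G) - ∫ y in Ioi 0, u y ∂G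
      = (∫ y in Ioc 0 a, v y - u y ∂G) + ∫ y in Ioi a, v y - u y ∂G := by
    rw [← integral_sub hv hu, ← setIntegral_union Ioc_disjoint_Ioi_same measurableSet_Ioi
      (hvu.mono_set Ioc_subset_Ioi_self) (hvu.mono_set (Ioi_subset_Ioi ha)),
      Ioc_union_Ioi_eq_Ioi ha]
  have hnear_part : ‖∫ y in Ioc 0 a, v y - u y ∂G‖ ≤ ε * ∫ y in Ioi 0, u y ∂G := by
    calc ‖∫ y in Ioc 0 a, v y - u y ∂G‖
        ≤ ∫ y in Ioc 0 a, ε * u y ∂G :=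
          norm_integral_le_of_norm_le ((hu.mono_set Ioc_subset_Ioi_self).const_mul _)
            ((ae_restrict_iff' measurableSet_Ioc).2 hnear)
      _ = ε * ∫ y in Ioc 0 a, u y ∂G := integral_const_mul _ _
      _ ≤ ε * ∫ y in Ioi 0, u y ∂G := by
          gcongr
          exact Ioc_subset_Ioi_self
  have htail_part : ‖∫ y in Ioi a, v y - u y ∂G‖ ≤ C * G.real (Ioi a) := by
    refine norm_setIntegral_le_of_norm_le_const_ae' (measure_lt_top _ _) ?_
    filter_upwards [hu_mem, hv_mem] with y huy hvy hya
    have hy0 : 0 < y := ha.trans_lt hya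
    rw [Real.norm_eq_abs, abs_le]
    constructor <;> linarith [(huy hy0).1, (huy hy0).2, (hvy hy0).1, (hvy hy0).2]
  rw [hsplit]
  exact (abs_add_le _ _).trans (add_le_add hnear_part htail_part)

theorem isEquivalent_setIntegral_Ioi_of_eventually_near {G : Measure ℝ} [IsFiniteMeasure G]
    {f g : ℝ → ℝ → ℝ} {C : ℝ}
    (hfm : ∀ x, AEStronglyMeasurable (f x) (G.restrict (Ioi 0)))
    (hgm : ∀ x, AEStronglyMeasurable (g x) (G.restrict (Ioi 0)))
    (hf : ∀ x, ∀ᵐ y ∂G, 0 < y → f x y ∈ Icc 0 C)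
    (hg : ∀ x, ∀ᵐ y ∂G, 0 < y → g x y ∈ Icc 0 C)
    (hnear : ∀ δ > 0, ∃ M > 0, ∀ x, ∀ᵐ y ∂G, 0 < y → M ≤ x / y → |f x y - g x y| ≤ δ * g x y)
    (htail : ∀ M > 0, (fun x => G.real (Ioi (x / M))) =o[atTop] fun x => ∫ y in Ioi 0, f x y ∂G) :
    (fun x => ∫ y in Ioi 0, f x y ∂G) ~[atTop] fun x => ∫ y in Ioi 0, g x y ∂G := by
  have hint : ∀ u : ℝ → ℝ → ℝ, (∀ x, AEStronglyMeasurable (u x) (G.restrict (Ioi 0))) →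
      (∀ x, ∀ᵐ y ∂G, 0 < y → u x y ∈ Icc 0 C) → ∀ x, IntegrableOn (u x) (Ioi 0) G := by
    intro u hum hu x
    refine IntegrableOn.of_bound (measure_lt_top _ _) (hum x) C ?_
    filter_upwards [ae_restrict_of_ae (hu x), ae_restrict_mem measurableSet_Ioi] with y hy hy0
    rw [Real.norm_eq_abs, abs_of_nonneg (hy hy0).1]
    exact (hy hy0).2
  refine IsEquivalent.symm (isLittleO_iff.2 fun c hc => ?_)
  -- with `δ ≤ 1 / 2` the error `δ * g` is at most `2 * δ * f`
  set δ := min (c / 4) (1 / 2)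
  have hδ : 0 < δ := by positivity
  obtain ⟨M, hM, hnearM⟩ := hnear δ hδ
  filter_upwards [eventually_ge_atTop 0,
    isLittleO_iff.1 ((htail M hM).const_mul_left C) (half_pos hc)] with x hx htailx
  have hnear_f : ∀ᵐ y ∂G, y ∈ Ioc 0 (x / M) → |g x y - f x y| ≤ 2 * δ * f x y := by
    filter_upwards [hnearM x, hg x] with y hy hgy ⟨hy0, hyx⟩
    have hMy : M ≤ x / y := by
      rw [le_div_iff₀ hy0]
      rwa [le_div_iff₀ hM, mul_comm] at hyx
    have hfg := abs_le.1 (hy hy0 hMy)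
    have hδg : δ * g x y ≤ g x y / 2 := by
      nlinarith [min_le_right (c / 4) (1 / 2), (hgy hy0).1]
    rw [abs_le]
    constructor <;> nlinarith
  have hU : 0 ≤ ∫ y in Ioi 0, f x y ∂G := setIntegral_nonneg_ae measurableSet_Ioi
    ((hf x).mono fun y hy hy0 => (hy hy0).1)
  have hdiff := abs_setIntegral_Ioi_sub_le (div_nonneg hx hM.le) (by positivity)
    (hint f hfm hf x) (hint g hgm hg x) (hf x) (hg x) hnear_f
  rw [Real.norm_eq_abs, Real.norm_eq_abs, abs_of_nonneg hU] at htailx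
  rw [Pi.sub_apply, Real.norm_eq_abs, Real.norm_of_nonneg hU]
  nlinarith [le_abs_self (C * G.real (Ioi (x / M))), min_le_left (c / 4) (1 / 2)]

theorem ProbabilityTheory.Kernel.measurable_apply_setOf_lt_mul (κ : Kernel ℝ ℝ)
    [IsSFiniteKernel κ] (x : ℝ) : Measurable fun y => κ y {u | x < u * y} :=
  Kernel.measurable_kernel_prodMk_left
    (measurableSet_lt measurable_const (measurable_snd.mul measurable_fst))

theorem condDistrib_real_ae_eq_of_tendsto {Ω E : Type*} {mΩ : MeasurableSpace Ω}
    [MeasurableSpace E] [StandardBorelSpace E] [Nonempty E] {μ : Measure Ω} [IsFiniteMeasure μ]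
    {X : Ω → E} {Y : Ω → ℝ} (hX : Measurable X) (hY : Measurable Y) {S : Set E}
    (hS : MeasurableSet S) :
    ∀ᵐ y ∂μ.map Y, ∀ c : ℝ,
      Tendsto (fun δ => (μ {ω | X ω ∈ S ∧ Y ω ∈ Ioc (y - δ) (y + δ)}).toReal /
        (μ {ω | Y ω ∈ Ioc (y - δ) (y + δ)}).toReal) (𝓝[>] 0) (𝓝 c) →
      (condDistrib X Y μ y).real S = c := by
  have hlint : ∀ A, MeasurableSet A →
      ∫⁻ y in A, condDistrib X Y μ y S ∂μ.map Y = μ {ω | X ω ∈ S ∧ Y ω ∈ A} := by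
    intro A hA
    rw [← Measure.compProd_apply_prod hA hS, compProd_map_condDistrib hX.aemeasurable,
      Measure.map_apply (hY.prodMk hX) (hA.prod hS)]
    congr 1 with ω
    exact and_comm
  have hfin : ∫⁻ y, condDistrib X Y μ y S ∂μ.map Y ≠ ∞ := by
    rw [← setLIntegral_univ, hlint univ MeasurableSet.univ]
    exact measure_ne_top _ _
  filter_upwards [ae_toReal_eq_of_tendsto_setLIntegral_Ioc_div (Kernel.measurable_coe _ hS) hfin]
    with y hy c hc
  refine hy c (hc.congr fun δ => ?_)
  rw [hlint _ measurableSet_Ioc, Measure.map_apply hY measurableSet_Ioc]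
  rfl

section Tails

variable {Ω : Type*} [MeasureSpace Ω] {X Y : Ω → ℝ}

theorem rvTail_nonneg (x : ℝ) : 0 ≤ rvTail X x := ENNReal.toReal_nonneg

theorem rvTail_eq_measureReal_map (hX : Measurable X) (x : ℝ) :
    rvTail X x = (Measure.map X ℙ).real (Ioi x) := by
  rw [rvTail, measureReal_def, Measure.map_apply hX measurableSet_Ioi]
  rfl

theorem ae_mem_distSupport (hY : Measurable Y) : ∀ᵐ y ∂Measure.map Y ℙ, y ∈ distSupport Y := by
  refine ae_iff.2 (measure_null_of_locally_null _ fun y hy => ?_)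
  simp only [distSupport, mem_ofPred_eq, not_forall, not_lt, nonpos_iff_eq_zero] at hy
  obtain ⟨δ, hδ, h0⟩ := hy
  refine ⟨Ioo (y - δ) (y + δ),
    mem_nhdsWithin_of_mem_nhds (Ioo_mem_nhds (by linarith) (by linarith)), ?_⟩
  rw [Measure.map_apply hY measurableSet_Ioo]
  exact h0

variable [IsProbabilityMeasure (ℙ : Measure Ω)]

theorem rvTail_le_one (x : ℝ) : rvTail X x ≤ 1 := measureReal_le_one

theorem antitone_rvTail : Antitone (rvTail X) :=
  fun _ _ hab => measureReal_mono fun _ hω => lt_of_le_of_lt hab hω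

theorem continuousWithinAt_rvTail (hX : Measurable X) (x : ℝ) :
    ContinuousWithinAt (rvTail X) (Ioi x) x := by
  have := Measure.isProbabilityMeasure_map (μ := ℙ) hX.aemeasurable
  rw [funext (rvTail_eq_measureReal_map hX)]
  exact continuousWithinAt_measureReal_Ioi _ x

theorem rvTail_mul_eq_setIntegral_condDistrib (hX : Measurable X) (hY : Measurable Y)
    (hY0 : ∀ ω, 0 ≤ Y ω) {x : ℝ} (hx : 0 ≤ x) :
    rvTail (fun ω => X ω * Y ω) x
      = ∫ y in Ioi 0, (condDistrib X Y ℙ y).real {u | x < u * y} ∂Measure.map Y ℙ := by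
  have hS : MeasurableSet {p : ℝ × ℝ | x < p.2 * p.1} :=
    measurableSet_lt measurable_const (measurable_snd.mul measurable_fst)
  have hG0 : ∀ᵐ y ∂Measure.map Y ℙ, 0 ≤ y :=
    (ae_map_iff hY.aemeasurable measurableSet_Ici).2 (ae_of_all _ hY0)
  have hlint : ℙ {ω | x < X ω * Y ω}
      = ∫⁻ y in Ioi 0, condDistrib X Y ℙ y {u | x < u * y} ∂Measure.map Y ℙ := by
    rw [← lintegral_indicator measurableSet_Ioi]
    calc ℙ {ω | x < X ω * Y ω}
        = (Measure.map Y ℙ ⊗ₘ condDistrib X Y ℙ) {p | x < p.2 * p.1} := by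
          rw [compProd_map_condDistrib hX.aemeasurable, Measure.map_apply (hY.prodMk hX) hS]
          rfl
      _ = ∫⁻ y, condDistrib X Y ℙ y {u | x < u * y} ∂Measure.map Y ℙ :=
          Measure.compProd_apply hS
      _ = _ := by
          refine lintegral_congr_ae ?_
          filter_upwards [hG0] with y hy
          rcases hy.lt_or_eq with hy | rfl
          · rw [indicator_of_mem (show y ∈ Ioi 0 from hy)]
          · simp [not_lt.2 hx]
  rw [rvTail, hlint, ← integral_toReal
    ((condDistrib X Y ℙ).measurable_apply_setOf_lt_mul x).aemeasurable.restrict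
    (ae_of_all _ fun _ => measure_lt_top _ _)]
  rfl

end Tails

namespace Assumption1

variable {Ω : Type*} [MeasureSpace Ω] [IsProbabilityMeasure (ℙ : Measure Ω)] {X Y : Ω → ℝ}
  {h : ℝ → ℝ} {K : ℝ → ℝ → ℝ}

theorem exists_ae_abs_condDistrib_sub_le (hX : Measurable X) (hY : Measurable Y)
    (hFunb : UnboundedDist X) (hA1 : Assumption1 X Y h K) {δ : ℝ} (hδ : 0 < δ) :
    ∃ M > 0, ∀ᵐ y ∂Measure.map Y ℙ, 0 ≤ y → ∀ x, M ≤ x →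
      |(condDistrib X Y ℙ y).real (Ioi x) - h y * rvTail X x| ≤ δ * (h y * rvTail X x) := by
  obtain ⟨-, hhpos, -, hlim, hunif⟩ := hA1
  obtain ⟨M, hM⟩ := eventually_atTop.1 (hunif δ hδ)
  refine ⟨max M 1, by positivity, ?_⟩
  have hrat := ae_all_iff.2 fun q : ℚ =>
    condDistrib_real_ae_eq_of_tendsto (μ := ℙ) hX hY (measurableSet_Ioi (a := (q : ℝ)))
  filter_upwards [hrat, ae_mem_distSupport hY] with y hyq hyD hy0 x hx
  refine le_of_forall_rat_gt_of_continuousWithinAt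
    ((continuousWithinAt_measureReal_Ioi _ x).sub
      ((continuousWithinAt_rvTail hX x).const_mul _)).abs
    (((continuousWithinAt_rvTail hX x).const_mul _).const_mul _) fun q hq => ?_
  have hqM : max M 1 ≤ (q : ℝ) := hx.trans hq.le
  have hb : 0 < h y * rvTail X q :=
    mul_pos (hhpos y hy0) (hFunb q (one_pos.trans_le ((le_max_right _ _).trans hqM)))
  rw [Pi.sub_apply, hyq q (K q y) (hlim y hyD q)]
  exact abs_sub_le_mul_of_abs_div_sub_one_le hb (hM q ((le_max_left _ _).trans hqM) y hy0).le

theorem exists_ae_abs_condDistrib_sub_le_of_le_div (hX : Measurable X) (hY : Measurable Y)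
    (hFunb : UnboundedDist X) (hA1 : Assumption1 X Y h K) {δ : ℝ} (hδ : 0 < δ) :
    ∃ M > 0, ∀ x, ∀ᵐ y ∂Measure.map Y ℙ, 0 < y → M ≤ x / y →
      |(condDistrib X Y ℙ y).real {u | x < u * y} - h y * rvTail X (x / y)|
        ≤ δ * (h y * rvTail X (x / y)) := by
  obtain ⟨M, hM, hnear⟩ := hA1.exists_ae_abs_condDistrib_sub_le hX hY hFunb hδ
  refine ⟨M, hM, fun x => ?_⟩
  filter_upwards [hnear] with y hy hy0 hMy
  rw [setOf_lt_mul_eq_Ioi_div hy0]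
  exact hy hy0.le _ hMy

theorem exists_ae_mul_rvTail_mem_Icc (hX : Measurable X) (hY : Measurable Y)
    (hFunb : UnboundedDist X) (hA1 : Assumption1 X Y h K) :
    ∃ C, ∀ᵐ y ∂Measure.map Y ℙ, 0 < y → ∀ t, h y * rvTail X t ∈ Icc 0 C := by
  obtain ⟨M, hM, hnear⟩ := hA1.exists_ae_abs_condDistrib_sub_le hX hY hFunb one_half_pos
  refine ⟨2 / rvTail X M, ?_⟩
  filter_upwards [hnear] with y hy hy0 t
  have hhy := (hA1.2.1 y hy0.le).le
  have hκ : (condDistrib X Y ℙ y).real (Ioi M) ≤ 1 := measureReal_le_one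
  have hhC : h y ≤ 2 / rvTail X M := by
    rw [le_div_iff₀ (hFunb M hM)]
    linarith [(abs_le.1 (hy hy0.le M le_rfl)).1]
  exact ⟨mul_nonneg hhy (rvTail_nonneg t),
    (mul_le_of_le_one_right hhy (rvTail_le_one t)).trans hhC⟩

end Assumption1

theorem product_tail_asymp_of_assumption1_general {Ω : Type*} [MeasureSpace Ω] [IsProbabilityMeasure (ℙ : Measure Ω)]
    (X Y : Ω → ℝ) (hXm : Measurable X) (hYm : Measurable Y)
    (hYnonneg : ∀ ω, 0 ≤ Y ω)
    (hFunb : UnboundedDist X)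
    (h : ℝ → ℝ) (K : ℝ → ℝ → ℝ) (hA1 : Assumption1 X Y h K) (hA2 : Assumption2 X Y) :
    (fun x => rvTail (fun ω => X ω * Y ω) x) ~[atTop]
      (fun x => ∫ y in Ioi (0 : ℝ), h y * rvTail X (x / y) ∂(Measure.map Y ℙ)) := by
  have hprod : (fun x => rvTail (fun ω => X ω * Y ω) x) =ᶠ[atTop]
      fun x => ∫ y in Ioi 0, (condDistrib X Y ℙ y).real {u | x < u * y} ∂Measure.map Y ℙ := by
    filter_upwards [eventually_ge_atTop 0] with x hx
    exact rvTail_mul_eq_setIntegral_condDistrib hXm hYm hYnonneg hx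
  have htail : ∀ M > 0, (fun x => (Measure.map Y ℙ).real (Ioi (x / M))) =o[atTop]
      fun x => ∫ y in Ioi 0, (condDistrib X Y ℙ y).real {u | x < u * y} ∂Measure.map Y ℙ := by
    intro M hM
    refine (hA2 M⁻¹ (inv_pos.2 hM)).congr' (Eventually.of_forall fun x => ?_) hprod
    dsimp only
    rw [rvTail_eq_measureReal_map hYm, inv_mul_eq_div]
  obtain ⟨C, hC⟩ := hA1.exists_ae_mul_rvTail_mem_Icc hXm hYm hFunb
  refine (isEquivalent_setIntegral_Ioi_of_eventually_near (C := max C 1)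
    (fun x => ((condDistrib X Y ℙ).measurable_apply_setOf_lt_mul x).ennreal_toReal
      |>.aestronglyMeasurable)
    (fun x => (hA1.1.mul (antitone_rvTail.measurable.comp
      (measurable_const.div measurable_id))).aestronglyMeasurable)
    (fun x => ae_of_all _ fun y _ =>
      ⟨measureReal_nonneg, measureReal_le_one.trans (le_max_right _ _)⟩)
    (fun x => hC.mono fun y hy hy0 => Icc_subset_Icc_right (le_max_left _ _) (hy hy0 (x / y)))
    (fun δ hδ => hA1.exists_ae_abs_condDistrib_sub_le_of_le_div hXm hYm hFunb hδ)
    htail).congr_left hprod.symm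

theorem product_tail_asymp_of_assumption1 {Ω : Type*} [MeasureSpace Ω] [IsProbabilityMeasure (ℙ : Measure Ω)]
    (X Y : Ω → ℝ) (hXm : Measurable X) (hYm : Measurable Y)
    (hYnonneg : ∀ ω, 0 ≤ Y ω)
    (hFunb : UnboundedDist X)
    (hXnd : ℙ {ω | X ω = 0} ≠ 1) (hYnd : ℙ {ω | Y ω = 0} ≠ 1)
    (h : ℝ → ℝ) (K : ℝ → ℝ → ℝ) (hA1 : Assumption1 X Y h K) (hA2 : Assumption2 X Y) :
    (fun x => rvTail (fun ω => X ω * Y ω) x) ~[atTop]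
      (fun x => ∫ y in Ioi (0 : ℝ), h y * rvTail X (x / y) ∂(Measure.map Y ℙ)) :=
  product_tail_asymp_of_assumption1_general X Y hXm hYm hYnonneg hFunb h K hA1 hA2
end
end

section
/- Let X be a real-valued random variable with unbounded distribution F and Y a nonnegative random variable with distribution G, neither degenerate at zero, and let H be the distribution of XY. Suppose (X,Y) follows an FGM distribution with parameter |θ|<1 and satisfies Assumption 2 (Ḡ(bx)=o(H̄(x)) as x→∞ for every b>0). Then P(XY>x) ~ ∫_0^∞ (1+θ(G(y)+G(y−)−1)) F̄(x/y) G(dy) as x→∞, where G(y−)=lim_{δ→0+} G(y−δ). -/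
open MeasureTheory ProbabilityTheory Filter Set Asymptotics

noncomputable section

open scoped Topology

/-!
Write `F`, `G` for the laws of `X`, `Y` and `w_G(y) = G(y) + G(y-) - 1`. Splitting
`{max(u, v) > b}` along the diagonal under `G ⊗ G` gives `∫_{(b,∞)} w_G dG = Ḡ(b) G(b)`, so the
measure with density `1 + θ w_F(x) w_G(y)` with respect to `F ⊗ G` has the FGM probabilities on
all quadrants `(a,∞) × (b,∞)`. The FGM identity, assumed only on the supports, extends to all
quadrants because the distribution functions are constant across null intervals; hence this
measure is the law of `(X, Y)`. Integrating it over `{x y > t}` gives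
`H̄(t) = ∫ (1 + θ w_G(y)) F̄(t/y) dG(y) - θ ∫ w_G(y) F̄(t/y)² dG(y)`.
The correction is at most `∫ F̄(t/y)² dG ≤ ε ∫ F̄(t/y) dG + Ḡ(b t)`: the first part is small
against the main term because `1 + θ w_G ≥ 1 - |θ| > 0`, and the second is `o(H̄(t))` by
Assumption 2.
-/

lemma probReal_Ioi_eq_one_sub (μ : Measure ℝ) [IsProbabilityMeasure μ] (a : ℝ) :
    μ.real (Ioi a) = 1 - μ.real (Iic a) := by
  rw [← compl_Iic, probReal_compl_eq_one_sub measurableSet_Iic]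

section CenteredCdf

variable (μ : Measure ℝ)

def centeredCdf (y : ℝ) : ℝ := μ.real (Iic y) + μ.real (Iio y) - 1

lemma measurable_measure_Iic_add_Iio : Measurable fun y => μ (Iic y) + μ (Iio y) :=
  (Monotone.measurable fun _ _ h => measure_mono (Iic_subset_Iic.2 h)).add
    (Monotone.measurable fun _ _ h => measure_mono (Iio_subset_Iio h))

lemma measurable_centeredCdf : Measurable (centeredCdf μ) :=
  ((Monotone.measurable fun _ _ h => measure_mono (Iic_subset_Iic.2 h)).ennreal_toReal.add
    (Monotone.measurable fun _ _ h => measure_mono (Iio_subset_Iio h)).ennreal_toReal).sub_const 1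

variable [IsProbabilityMeasure μ]

lemma abs_centeredCdf_le_one (y : ℝ) : |centeredCdf μ y| ≤ 1 := by
  have h₁ : μ.real (Iic y) ≤ 1 := measureReal_le_one
  have h₂ : μ.real (Iio y) ≤ 1 := measureReal_le_one
  rw [centeredCdf, abs_le]
  constructor <;> linarith [measureReal_nonneg (μ := μ) (s := Iic y),
    measureReal_nonneg (μ := μ) (s := Iio y)]

lemma abs_mul_centeredCdf_le (θ y : ℝ) : |θ * centeredCdf μ y| ≤ |θ| := by
  rw [abs_mul]; exact mul_le_of_le_one_right (abs_nonneg θ) (abs_centeredCdf_le_one μ y)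

lemma lintegral_Ioi_measure_Iic_add_Iio (b : ℝ) :
    ∫⁻ y in Ioi b, (μ (Iic y) + μ (Iio y)) ∂μ = 1 - μ (Iic b) ^ 2 := by
  have hle : MeasurableSet {p : ℝ × ℝ | b < p.2 ∧ p.1 ≤ p.2} :=
    (measurableSet_lt measurable_const measurable_snd).inter
      (measurableSet_le measurable_fst measurable_snd)
  have hlt : MeasurableSet {p : ℝ × ℝ | b < p.1 ∧ p.2 < p.1} :=
    (measurableSet_lt measurable_const measurable_fst).inter
      (measurableSet_lt measurable_snd measurable_fst)
  have h₁ : ∫⁻ y in Ioi b, μ (Iic y) ∂μ = (μ.prod μ) {p | b < p.2 ∧ p.1 ≤ p.2} := by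
    rw [Measure.prod_apply_symm hle, ← lintegral_indicator measurableSet_Ioi]
    congr 1 with y
    by_cases hy : b < y <;> simp [hy, Set.indicator, Iic_def]
  have h₂ : ∫⁻ y in Ioi b, μ (Iio y) ∂μ = (μ.prod μ) {p | b < p.1 ∧ p.2 < p.1} := by
    rw [Measure.prod_apply hlt, ← lintegral_indicator measurableSet_Ioi]
    congr 1 with y
    by_cases hy : b < y <;> simp [hy, Set.indicator, Iio_def]
  have hunion : {p : ℝ × ℝ | b < p.2 ∧ p.1 ≤ p.2} ∪ {p | b < p.1 ∧ p.2 < p.1}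
      = (Iic b ×ˢ Iic b)ᶜ := by
    ext p
    simp only [mem_union, mem_ofPred_eq, mem_compl_iff, mem_prod, mem_Iic, not_and_or, not_le]
    constructor
    · rintro (⟨h, -⟩ | ⟨h, -⟩)
      exacts [Or.inr h, Or.inl h]
    · rcases le_or_gt p.1 p.2 with h | h <;> rintro (h' | h')
      exacts [Or.inl ⟨h'.trans_le h, h⟩, Or.inl ⟨h', h⟩, Or.inr ⟨h', h⟩, Or.inr ⟨h'.trans h, h⟩]
  have hdisj : Disjoint {p : ℝ × ℝ | b < p.2 ∧ p.1 ≤ p.2} {p | b < p.1 ∧ p.2 < p.1} :=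
    disjoint_left.2 fun p h h' => (h.2.not_gt h'.2)
  rw [lintegral_add_left (Monotone.measurable fun _ _ h => measure_mono (Iic_subset_Iic.2 h)),
    h₁, h₂, ← measure_union hdisj hlt, hunion,
    prob_compl_eq_one_sub (measurableSet_Iic.prod measurableSet_Iic), Measure.prod_prod, sq]

lemma integrable_centeredCdf (m : Measure ℝ) [IsFiniteMeasure m] : Integrable (centeredCdf μ) m :=
  .of_bound (measurable_centeredCdf μ).aestronglyMeasurable 1
    (ae_of_all _ (abs_centeredCdf_le_one μ))

lemma setIntegral_Ioi_centeredCdf (b : ℝ) :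
    ∫ y in Ioi b, centeredCdf μ y ∂μ = μ.real (Ioi b) * μ.real (Iic b) := by
  have hsum : ∫ y in Ioi b, (centeredCdf μ y + 1) ∂μ = 1 - μ.real (Iic b) ^ 2 := by
    simp_rw [centeredCdf, sub_add_cancel, measureReal_def,
      ← ENNReal.toReal_add (measure_ne_top _ _) (measure_ne_top _ _)]
    rw [integral_toReal (measurable_measure_Iic_add_Iio μ).aemeasurable
        (ae_of_all _ fun y => by simp), lintegral_Ioi_measure_Iic_add_Iio,
      ENNReal.toReal_sub_of_le _ ENNReal.one_ne_top, ENNReal.toReal_pow, ENNReal.toReal_one]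
    exact pow_le_one₀ zero_le prob_le_one
  have htail := probReal_Ioi_eq_one_sub μ b
  rw [integral_add (integrable_centeredCdf μ _) (integrable_const 1), setIntegral_const,
    smul_eq_mul, mul_one, htail] at hsum
  rw [htail]
  linear_combination hsum

end CenteredCdf

def fgmSurvival (μ ν : Measure ℝ) (θ a b : ℝ) : ℝ :=
  μ.real (Ioi a) * ν.real (Ioi b) * (1 + θ * μ.real (Iic a) * ν.real (Iic b))

section FgmMeasure

variable (μ ν : Measure ℝ) (θ : ℝ)

def fgmDensity (p : ℝ × ℝ) : ℝ := 1 + θ * centeredCdf μ p.1 * centeredCdf ν p.2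

/-- For atomless marginals `centeredCdf μ = 2F - 1`, and the density is the familiar
`1 + θ (1 - 2F(x)) (1 - 2G(y))`. -/
def fgmMeasure : Measure (ℝ × ℝ) :=
  (μ.prod ν).withDensity fun p => ENNReal.ofReal (fgmDensity μ ν θ p)

lemma measurable_fgmDensity : Measurable (fgmDensity μ ν θ) :=
  measurable_const.add ((measurable_const.mul ((measurable_centeredCdf μ).comp measurable_fst)).mul
    ((measurable_centeredCdf ν).comp measurable_snd))

variable [IsProbabilityMeasure μ] {θ}

lemma setIntegral_Ioi_fgmDensity (t y : ℝ) :
    ∫ u in Ioi t, fgmDensity μ ν θ (u, y) ∂μ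
      = (1 + θ * centeredCdf ν y) * μ.real (Ioi t) - θ * centeredCdf ν y * μ.real (Ioi t) ^ 2 := by
  have hmul : ∫ u in Ioi t, θ * centeredCdf μ u * centeredCdf ν y ∂μ
      = θ * centeredCdf ν y * (μ.real (Ioi t) * μ.real (Iic t)) := by
    rw [integral_mul_const, integral_const_mul, setIntegral_Ioi_centeredCdf]
    ring
  simp only [fgmDensity]
  rw [integral_add (integrable_const 1)
      (((integrable_centeredCdf μ _).const_mul θ).mul_const _), hmul, setIntegral_const,
    smul_eq_mul, mul_one, probReal_Ioi_eq_one_sub μ t]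
  ring

variable [IsProbabilityMeasure ν]

lemma abs_mul_centeredCdf_mul_le (hθ : |θ| ≤ 1) (x y : ℝ) :
    |θ * centeredCdf μ x * centeredCdf ν y| ≤ 1 := by
  rw [abs_mul]
  exact mul_le_one₀ ((abs_mul_centeredCdf_le μ θ x).trans hθ) (abs_nonneg _)
    (abs_centeredCdf_le_one ν y)

lemma fgmDensity_nonneg (hθ : |θ| ≤ 1) (p : ℝ × ℝ) : 0 ≤ fgmDensity μ ν θ p := by
  have := abs_le.1 (abs_mul_centeredCdf_mul_le μ ν hθ p.1 p.2)
  rw [fgmDensity]; linarith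

lemma integrable_mul_centeredCdf_mul (hθ : |θ| ≤ 1) (m : Measure (ℝ × ℝ)) [IsFiniteMeasure m] :
    Integrable (fun p => θ * centeredCdf μ p.1 * centeredCdf ν p.2) m :=
  .of_bound ((measurable_const.mul ((measurable_centeredCdf μ).comp measurable_fst)).mul
    ((measurable_centeredCdf ν).comp measurable_snd)).aestronglyMeasurable 1
    (ae_of_all _ fun p => abs_mul_centeredCdf_mul_le μ ν hθ p.1 p.2)

lemma integrable_fgmDensity (hθ : |θ| ≤ 1) (m : Measure (ℝ × ℝ)) [IsFiniteMeasure m] :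
    Integrable (fgmDensity μ ν θ) m :=
  (integrable_const 1).add (integrable_mul_centeredCdf_mul μ ν hθ m)

lemma isFiniteMeasure_fgmMeasure (hθ : |θ| ≤ 1) : IsFiniteMeasure (fgmMeasure μ ν θ) :=
  isFiniteMeasure_withDensity_ofReal (integrable_fgmDensity μ ν hθ _).2

lemma fgmMeasure_real_apply (hθ : |θ| ≤ 1) {s : Set (ℝ × ℝ)} (hs : MeasurableSet s) :
    (fgmMeasure μ ν θ).real s = ∫ p in s, fgmDensity μ ν θ p ∂(μ.prod ν) := by
  rw [measureReal_def, fgmMeasure, withDensity_apply _ hs, integral_eq_lintegral_of_nonneg_ae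
    (ae_of_all _ (fgmDensity_nonneg μ ν hθ)) (measurable_fgmDensity μ ν θ).aestronglyMeasurable]

lemma fgmMeasure_real_Ioi_prod_Ioi (hθ : |θ| ≤ 1) (a b : ℝ) :
    (fgmMeasure μ ν θ).real (Ioi a ×ˢ Ioi b)
      = fgmSurvival μ ν θ a b := by
  have hprod : ∫ p in Ioi a ×ˢ Ioi b, θ * centeredCdf μ p.1 * centeredCdf ν p.2 ∂(μ.prod ν)
      = θ * ((μ.real (Ioi a) * μ.real (Iic a)) * (ν.real (Ioi b) * ν.real (Iic b))) := by
    simp_rw [mul_assoc]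
    rw [integral_const_mul, setIntegral_prod_mul, setIntegral_Ioi_centeredCdf,
      setIntegral_Ioi_centeredCdf]
    ring
  rw [fgmMeasure_real_apply μ ν hθ (measurableSet_Ioi.prod measurableSet_Ioi)]
  simp only [fgmDensity]
  rw [integral_add (integrable_const 1) (integrable_mul_centeredCdf_mul μ ν hθ _), hprod,
    setIntegral_const, smul_eq_mul, mul_one, measureReal_prod_prod, fgmSurvival]
  ring

lemma fgmMeasure_real_lt_mul (hθ : |θ| ≤ 1) (hν : ∀ᵐ y ∂ν, 0 ≤ y) {x : ℝ} (hx : 0 < x) :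
    (fgmMeasure μ ν θ).real {p | x < p.1 * p.2}
      = ∫ y in Ioi 0, ((1 + θ * centeredCdf ν y) * μ.real (Ioi (x / y))
          - θ * centeredCdf ν y * μ.real (Ioi (x / y)) ^ 2) ∂ν := by
  have hS : MeasurableSet {p : ℝ × ℝ | x < p.1 * p.2} :=
    measurableSet_lt measurable_const (measurable_fst.mul measurable_snd)
  rw [fgmMeasure_real_apply μ ν hθ hS, ← integral_indicator hS,
    integral_prod_symm _ ((integrable_fgmDensity μ ν hθ _).indicator hS),
    ← integral_indicator measurableSet_Ioi]
  refine integral_congr_ae ?_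
  filter_upwards [hν] with y hy
  rcases hy.eq_or_lt with rfl | hy
  · simp [Set.indicator, not_lt.2 hx.le]
  · have hsection : ∀ u, {p : ℝ × ℝ | x < p.1 * p.2}.indicator (fgmDensity μ ν θ) (u, y)
        = (Ioi (x / y)).indicator (fun u => fgmDensity μ ν θ (u, y)) u := fun u => by
      simp [Set.indicator, div_lt_iff₀ hy]
    rw [integral_congr_ae (ae_of_all _ hsection), integral_indicator measurableSet_Ioi,
      setIntegral_Ioi_fgmDensity, indicator_of_mem (mem_Ioi.2 hy)]

end FgmMeasure

lemma measure_Iic_eq_zero_or_exists_mem_support (μ : Measure ℝ) (a : ℝ) :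
    μ (Iic a) = 0 ∨ ∃ a' ∈ μ.support, a' ≤ a ∧ μ (Ioc a' a) = 0 := by
  by_cases hne : (μ.support ∩ Iic a).Nonempty
  · right
    have hbdd : BddAbove (μ.support ∩ Iic a) := ⟨a, fun _ h => h.2⟩
    obtain ⟨hmem, hle⟩ : sSup (μ.support ∩ Iic a) ∈ μ.support ∩ Iic a :=
      (Measure.isClosed_support.inter isClosed_Iic).csSup_mem hne hbdd
    refine ⟨_, hmem, hle, measure_mono_null (t := μ.supportᶜ) (fun z hz hzs => ?_)
      Measure.measure_compl_support⟩
    exact hz.1.not_ge (le_csSup hbdd ⟨hzs, hz.2⟩)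
  · left
    exact measure_mono_null (t := μ.supportᶜ) (fun z hz hzs => hne ⟨z, hzs, hz⟩)
      Measure.measure_compl_support

section NullInterval

variable {μ : Measure ℝ} {a' a : ℝ}

lemma measure_Ioi_eq_of_measure_Ioc_eq_zero (h : a' ≤ a) (h0 : μ (Ioc a' a) = 0) :
    μ (Ioi a') = μ (Ioi a) := by
  rw [← Ioc_union_Ioi_eq_Ioi h]
  exact le_antisymm ((measure_union_le _ _).trans (by rw [h0, zero_add]))
    (measure_mono subset_union_right)

lemma measure_Iic_eq_of_measure_Ioc_eq_zero (h : a' ≤ a) (h0 : μ (Ioc a' a) = 0) :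
    μ (Iic a') = μ (Iic a) := by
  rw [← Iic_union_Ioc_eq_Iic h]
  exact le_antisymm (measure_mono subset_union_left)
    ((measure_union_le _ _).trans (by rw [h0, add_zero]))

end NullInterval

lemma fgmSurvival_eq_of_measure_Ioc_eq_zero {μ ν : Measure ℝ} {θ a' a b' b : ℝ} (ha : a' ≤ a)
    (hμ : μ (Ioc a' a) = 0) (hb : b' ≤ b) (hν : ν (Ioc b' b) = 0) :
    fgmSurvival μ ν θ a' b' = fgmSurvival μ ν θ a b := by
  simp only [fgmSurvival, measureReal_def, measure_Ioi_eq_of_measure_Ioc_eq_zero ha hμ,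
    measure_Iic_eq_of_measure_Ioc_eq_zero ha hμ, measure_Ioi_eq_of_measure_Ioc_eq_zero hb hν,
    measure_Iic_eq_of_measure_Ioc_eq_zero hb hν]

section JointLaw

variable {π : Measure (ℝ × ℝ)} [IsProbabilityMeasure π]

lemma measureReal_Ioi_prod_Ioi_eq_fgmSurvival {θ : ℝ}
    (h : ∀ a ∈ (π.map Prod.fst).support, ∀ b ∈ (π.map Prod.snd).support,
      π.real (Ioi a ×ˢ Ioi b) = fgmSurvival (π.map Prod.fst) (π.map Prod.snd) θ a b) (a b : ℝ) :
    π.real (Ioi a ×ˢ Ioi b) = fgmSurvival (π.map Prod.fst) (π.map Prod.snd) θ a b := by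
  have hfst (s : Set ℝ) (hs : MeasurableSet s) : π.map Prod.fst s = π (s ×ˢ univ) := by
    rw [Measure.map_apply measurable_fst hs, prod_univ]
  have hsnd (s : Set ℝ) (hs : MeasurableSet s) : π.map Prod.snd s = π (univ ×ˢ s) := by
    rw [Measure.map_apply measurable_snd hs, univ_prod]
  have := Measure.isProbabilityMeasure_map (μ := π) measurable_fst.aemeasurable
  have := Measure.isProbabilityMeasure_map (μ := π) measurable_snd.aemeasurable
  have hF (a : ℝ) (h0 : π.map Prod.fst (Iic a) = 0) : (π.map Prod.fst).real (Ioi a) = 1 := by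
    rw [probReal_Ioi_eq_one_sub, measureReal_def, h0, ENNReal.toReal_zero, sub_zero]
  have hG (b : ℝ) (h0 : π.map Prod.snd (Iic b) = 0) : (π.map Prod.snd).real (Ioi b) = 1 := by
    rw [probReal_Ioi_eq_one_sub, measureReal_def, h0, ENNReal.toReal_zero, sub_zero]
  rcases measure_Iic_eq_zero_or_exists_mem_support (π.map Prod.fst) a with
    hFa | ⟨a', ha', ha'a, hμ⟩
  · have hset : Ioi a ×ˢ Ioi b = (univ ×ˢ Ioi b) \ (Iic a ×ˢ univ) := by
      ext p; simp [and_comm]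
    rw [hset, measureReal_def, measure_sdiff_null (by rwa [← hfst _ measurableSet_Iic]),
      ← hsnd _ measurableSet_Ioi, fgmSurvival, hF a hFa, measureReal_def _ (Iic a), hFa]
    simp [measureReal_def]
  rcases measure_Iic_eq_zero_or_exists_mem_support (π.map Prod.snd) b with
    hGb | ⟨b', hb', hb'b, hν⟩
  · have hset : Ioi a ×ˢ Ioi b = (Ioi a ×ˢ univ) \ (univ ×ˢ Iic b) := by
      ext p; simp
    rw [hset, measureReal_def, measure_sdiff_null (by rwa [← hsnd _ measurableSet_Iic]),
      ← hfst _ measurableSet_Ioi, fgmSurvival, hG b hGb, measureReal_def _ (Iic b), hGb]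
    simp [measureReal_def]
  have hset : Ioi a ×ˢ Ioi b = (Ioi a' ×ˢ Ioi b') \ (Ioc a' a ×ˢ univ ∪ univ ×ˢ Ioc b' b) := by
    ext ⟨x, y⟩
    simp only [mem_prod, mem_Ioi, Set.mem_sdiff, mem_union, mem_Ioc, mem_univ, and_true, true_and]
    constructor
    · rintro ⟨hx, hy⟩
      exact ⟨⟨ha'a.trans_lt hx, hb'b.trans_lt hy⟩, by rintro (h | h) <;> linarith [h.2]⟩
    · rintro ⟨⟨hx, hy⟩, h⟩
      exact ⟨not_le.1 fun hxa => h (Or.inl ⟨hx, hxa⟩), not_le.1 fun hyb => h (Or.inr ⟨hy, hyb⟩)⟩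
  rw [← fgmSurvival_eq_of_measure_Ioc_eq_zero ha'a hμ hb'b hν, ← h a' ha' b' hb', hset,
    measureReal_def, measureReal_def, measure_sdiff_null (measure_union_null
      (by rwa [← hfst _ measurableSet_Ioc]) (by rwa [← hsnd _ measurableSet_Ioc]))]

end JointLaw

lemma ext_of_measure_Ioi_prod_Ioi {π π' : Measure (ℝ × ℝ)} [IsFiniteMeasure π]
    (h : ∀ a b, π (Ioi a ×ˢ Ioi b) = π' (Ioi a ×ˢ Ioi b)) : π = π' := by
  have hspan : IsCountablySpanning (range (Ioi : ℝ → Set ℝ)) :=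
    ⟨fun n => Ioi (-(n : ℝ)), fun n => mem_range_self _,
      iUnion_eq_univ_iff.2 fun z => (exists_nat_gt (-z)).imp fun n hn => by
        rw [mem_Ioi]; linarith⟩
  have hgen : (inferInstance : MeasurableSpace (ℝ × ℝ)) = MeasurableSpace.generateFrom
      (image2 (· ×ˢ ·) (range (Ioi : ℝ → Set ℝ)) (range (Ioi : ℝ → Set ℝ))) := by
    rw [← generateFrom_prod_eq hspan hspan, ← borel_eq_generateFrom_Ioi ℝ,
      ← BorelSpace.measurable_eq]
  refine Measure.ext_of_generateFrom_of_iUnion _ (fun n => Ioi (-(n : ℝ)) ×ˢ Ioi (-(n : ℝ))) hgen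
    (isPiSystem_Ioi.prod isPiSystem_Ioi) ?_ (fun n => mem_image2_of_mem (mem_range_self _)
      (mem_range_self _)) (fun n => measure_ne_top _ _) ?_
  · refine iUnion_eq_univ_iff.2 fun p => (exists_nat_gt (max (-p.1) (-p.2))).imp fun n hn => ?_
    simp only [mem_prod, mem_Ioi]
    constructor <;> linarith [le_max_left (-p.1) (-p.2), le_max_right (-p.1) (-p.2)]
  · rintro _ ⟨_, ⟨a, rfl⟩, _, ⟨b, rfl⟩, rfl⟩
    exact h a b

lemma eq_fgmMeasure_of_forall_mem_support {π : Measure (ℝ × ℝ)} [IsProbabilityMeasure π] {θ : ℝ}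
    (hθ : |θ| ≤ 1)
    (h : ∀ a ∈ (π.map Prod.fst).support, ∀ b ∈ (π.map Prod.snd).support,
      π.real (Ioi a ×ˢ Ioi b) = fgmSurvival (π.map Prod.fst) (π.map Prod.snd) θ a b) :
    π = fgmMeasure (π.map Prod.fst) (π.map Prod.snd) θ := by
  have := Measure.isProbabilityMeasure_map (μ := π) measurable_fst.aemeasurable
  have := Measure.isProbabilityMeasure_map (μ := π) measurable_snd.aemeasurable
  have := isFiniteMeasure_fgmMeasure (π.map Prod.fst) (π.map Prod.snd) hθ
  refine ext_of_measure_Ioi_prod_Ioi fun a b => ?_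
  rw [← ENNReal.toReal_eq_toReal_iff' (measure_ne_top _ _) (measure_ne_top _ _),
    ← measureReal_def, ← measureReal_def, measureReal_Ioi_prod_Ioi_eq_fgmSurvival h,
    fgmMeasure_real_Ioi_prod_Ioi _ _ hθ]

section RandomVariables

variable {Ω : Type*} [MeasureSpace Ω] {Z : Ω → ℝ}

lemma rvTail_eq_measureReal (hZ : Measurable Z) (x : ℝ) :
    rvTail Z x = (Measure.map Z ℙ).real (Ioi x) :=
  (map_measureReal_apply hZ measurableSet_Ioi).symm

lemma rvCdf_eq_measureReal (hZ : Measurable Z) (x : ℝ) :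
    rvCdf Z x = (Measure.map Z ℙ).real (Iic x) :=
  (map_measureReal_apply hZ measurableSet_Iic).symm

lemma rvCdfLeft_eq_measureReal (hZ : Measurable Z) (x : ℝ) :
    rvCdfLeft Z x = (Measure.map Z ℙ).real (Iio x) :=
  (map_measureReal_apply hZ measurableSet_Iio).symm

lemma distSupport_eq_support (hZ : Measurable Z) : distSupport Z = (Measure.map Z ℙ).support := by
  ext y
  rw [(nhds_basis_Ioo_pos y).mem_measureSupport]
  exact forall₂_congr fun δ _ => by rw [Measure.map_apply hZ measurableSet_Ioo]; rfl

end RandomVariables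

section FGMPair

variable {Ω : Type*} [MeasureSpace Ω] [IsProbabilityMeasure (ℙ : Measure Ω)] {X Y : Ω → ℝ}
  {θ : ℝ}

lemma FGM.map_eq_fgmMeasure (hX : Measurable X) (hY : Measurable Y) (hFGM : FGM X Y θ) :
    Measure.map (fun ω => (X ω, Y ω)) ℙ = fgmMeasure (Measure.map X ℙ) (Measure.map Y ℙ) θ := by
  have hXY : Measurable fun ω => (X ω, Y ω) := hX.prodMk hY
  have := Measure.isProbabilityMeasure_map (μ := (ℙ : Measure Ω)) hXY.aemeasurable
  have hfst : (Measure.map (fun ω => (X ω, Y ω)) ℙ).map Prod.fst = Measure.map X ℙ :=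
    Measure.map_map measurable_fst hXY
  have hsnd : (Measure.map (fun ω => (X ω, Y ω)) ℙ).map Prod.snd = Measure.map Y ℙ :=
    Measure.map_map measurable_snd hXY
  rw [← hfst, ← hsnd]
  refine eq_fgmMeasure_of_forall_mem_support (abs_le.2 hFGM.1) fun a ha b hb => ?_
  rw [hfst, ← distSupport_eq_support hX] at ha
  rw [hsnd, ← distSupport_eq_support hY] at hb
  rw [hfst, hsnd, map_measureReal_apply hXY (measurableSet_Ioi.prod measurableSet_Ioi), fgmSurvival,
    ← rvTail_eq_measureReal hX, ← rvTail_eq_measureReal hY, ← rvCdf_eq_measureReal hX,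
    ← rvCdf_eq_measureReal hY, ← hFGM.2 a ha b hb]
  rfl

lemma FGM.rvTail_mul_eq_integral (hX : Measurable X) (hY : Measurable Y) (hY0 : ∀ ω, 0 ≤ Y ω)
    (hFGM : FGM X Y θ) {x : ℝ} (hx : 0 < x) :
    rvTail (fun ω => X ω * Y ω) x
      = ∫ y in Ioi 0,
          ((1 + θ * centeredCdf (Measure.map Y ℙ) y) * (Measure.map X ℙ).real (Ioi (x / y))
            - θ * centeredCdf (Measure.map Y ℙ) y * (Measure.map X ℙ).real (Ioi (x / y)) ^ 2)
          ∂(Measure.map Y ℙ) := by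
  have hXY : Measurable fun ω => (X ω, Y ω) := hX.prodMk hY
  have := Measure.isProbabilityMeasure_map (μ := (ℙ : Measure Ω)) hX.aemeasurable
  have := Measure.isProbabilityMeasure_map (μ := (ℙ : Measure Ω)) hY.aemeasurable
  have hnonneg : ∀ᵐ y ∂(Measure.map Y ℙ), 0 ≤ y :=
    (ae_map_iff hY.aemeasurable measurableSet_Ici).2 (ae_of_all _ hY0)
  rw [← fgmMeasure_real_lt_mul _ _ (abs_le.2 hFGM.1) hnonneg hx, ← hFGM.map_eq_fgmMeasure hX hY,
    map_measureReal_apply hXY (measurableSet_lt measurable_const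
      (measurable_fst.mul measurable_snd) : MeasurableSet {p : ℝ × ℝ | x < p.1 * p.2})]
  rfl

end FGMPair

lemma Asymptotics.isEquivalent_of_abs_sub_le {α : Type*} {l : Filter α} {u v : α → ℝ}
    (h : ∀ ε > 0, ∀ᶠ x in l, |u x - v x| ≤ ε * (|u x| + |v x|)) : u ~[l] v := by
  refine IsLittleO.of_bound fun c hc => ?_
  filter_upwards [h (c / (c + 2)) (by positivity)] with x hx
  have hu : |u x| ≤ |u x - v x| + |v x| := by simpa using abs_add_le (u x - v x) (v x)
  rw [div_mul_eq_mul_div, le_div_iff₀ (by positivity)] at hx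
  simp only [Pi.sub_apply, Real.norm_eq_abs]
  nlinarith

section Asymptotics

variable (μ ν : Measure ℝ) [IsProbabilityMeasure μ]

lemma measurable_measureReal_Ioi_div (x : ℝ) : Measurable fun y => μ.real (Ioi (x / y)) :=
  (Antitone.measurable fun _ _ h => measureReal_mono (Ioi_subset_Ioi h)).comp
    (measurable_const.div measurable_id)

lemma sq_measureReal_Ioi_div_le {M ε x y : ℝ} (hM : 0 < M) (hMε : μ.real (Ioi M) ≤ ε)
    (hy : 0 < y) :
    μ.real (Ioi (x / y)) ^ 2 ≤ ε * μ.real (Ioi (x / y)) + (Ioi (M⁻¹ * x)).indicator 1 y := by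
  have hT₀ : 0 ≤ μ.real (Ioi (x / y)) := measureReal_nonneg
  have hT₁ : μ.real (Ioi (x / y)) ≤ 1 := measureReal_le_one
  by_cases hyx : y ≤ M⁻¹ * x
  · have hMy : M ≤ x / y := by
      rw [le_div_iff₀ hy]; rw [← div_eq_inv_mul, le_div_iff₀ hM] at hyx; linarith
    rw [indicator_of_notMem (by simpa using hyx), add_zero, sq]
    exact mul_le_mul_of_nonneg_right ((measureReal_mono (Ioi_subset_Ioi hMy)).trans hMε) hT₀
  · have hε : 0 ≤ ε := measureReal_nonneg.trans hMε
    rw [indicator_of_mem (by simpa using hyx), Pi.one_apply]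
    nlinarith [mul_nonneg hε hT₀]

lemma integrable_measureReal_Ioi_div (m : Measure ℝ) [IsFiniteMeasure m] (x : ℝ) :
    Integrable (fun y => μ.real (Ioi (x / y))) m :=
  .of_bound (measurable_measureReal_Ioi_div μ x).aestronglyMeasurable 1 (ae_of_all _ fun _ => by
    rw [Real.norm_eq_abs, abs_of_nonneg measureReal_nonneg]; exact measureReal_le_one)

lemma integrable_sq_measureReal_Ioi_div (m : Measure ℝ) [IsFiniteMeasure m] (x : ℝ) :
    Integrable (fun y => μ.real (Ioi (x / y)) ^ 2) m := by
  simpa only [sq] using (integrable_measureReal_Ioi_div μ m x).bdd_mul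
    (measurable_measureReal_Ioi_div μ x).aestronglyMeasurable (c := 1) (ae_of_all _ fun _ => by
      rw [Real.norm_eq_abs, abs_of_nonneg measureReal_nonneg]; exact measureReal_le_one)

lemma exists_setIntegral_sq_measureReal_Ioi_div_le [IsFiniteMeasure ν] {ε : ℝ} (hε : 0 < ε) :
    ∃ b > 0, ∀ x, ∫ y in Ioi 0, μ.real (Ioi (x / y)) ^ 2 ∂ν
      ≤ ε * ∫ y in Ioi 0, μ.real (Ioi (x / y)) ∂ν + ν.real (Ioi (b * x)) := by
  have htail : Tendsto (fun t => μ.real (Ioi t)) atTop (𝓝 0) := by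
    simpa [← ProbabilityTheory.cdf_eq_real, probReal_Ioi_eq_one_sub] using
      (tendsto_const_nhds (x := (1 : ℝ))).sub (ProbabilityTheory.tendsto_cdf_atTop μ)
  obtain ⟨M, hMε, hM⟩ := ((htail.eventually (ge_mem_nhds hε)).and (eventually_gt_atTop 0)).exists
  refine ⟨M⁻¹, inv_pos.2 hM, fun x => ?_⟩
  have hind : Integrable ((Ioi (M⁻¹ * x)).indicator (1 : ℝ → ℝ)) (ν.restrict (Ioi 0)) :=
    (integrable_const 1).indicator measurableSet_Ioi
  have hεT := (integrable_measureReal_Ioi_div μ (ν.restrict (Ioi 0)) x).const_mul ε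
  calc ∫ y in Ioi 0, μ.real (Ioi (x / y)) ^ 2 ∂ν
      ≤ ∫ y in Ioi 0, (ε * μ.real (Ioi (x / y)) + (Ioi (M⁻¹ * x)).indicator 1 y) ∂ν :=
        setIntegral_mono_on (integrable_sq_measureReal_Ioi_div μ _ x) (hεT.add hind)
          measurableSet_Ioi fun y hy => sq_measureReal_Ioi_div_le μ hM hMε hy
    _ = ε * ∫ y in Ioi 0, μ.real (Ioi (x / y)) ∂ν + ν.real (Ioi (M⁻¹ * x) ∩ Ioi 0) := by
        rw [integral_add hεT hind, integral_const_mul, integral_indicator_one measurableSet_Ioi,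
          measureReal_restrict_apply measurableSet_Ioi]
    _ ≤ _ := add_le_add_right (measureReal_mono inter_subset_left) _

variable [IsProbabilityMeasure ν] {θ : ℝ}

lemma integrable_one_add_mul_centeredCdf_mul (hθ : |θ| ≤ 1) (x : ℝ) (m : Measure ℝ)
    [IsFiniteMeasure m] :
    Integrable (fun y => (1 + θ * centeredCdf ν y) * μ.real (Ioi (x / y))) m :=
  (integrable_measureReal_Ioi_div μ m x).bdd_mul
    (measurable_const.add (measurable_const.mul (measurable_centeredCdf ν))).aestronglyMeasurable
    (c := 2) (ae_of_all _ fun y => by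
      have := abs_le.1 ((abs_mul_centeredCdf_le ν θ y).trans hθ)
      rw [Real.norm_eq_abs, abs_le]; constructor <;> linarith)

lemma abs_setIntegral_fgm_sub_le (hθ : |θ| ≤ 1) (x : ℝ) :
    |∫ y in Ioi 0, ((1 + θ * centeredCdf ν y) * μ.real (Ioi (x / y))
        - θ * centeredCdf ν y * μ.real (Ioi (x / y)) ^ 2) ∂ν
      - ∫ y in Ioi 0, (1 + θ * centeredCdf ν y) * μ.real (Ioi (x / y)) ∂ν|
      ≤ ∫ y in Ioi 0, μ.real (Ioi (x / y)) ^ 2 ∂ν := by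
  have hR : Integrable (fun y => θ * centeredCdf ν y * μ.real (Ioi (x / y)) ^ 2)
      (ν.restrict (Ioi 0)) :=
    (integrable_sq_measureReal_Ioi_div μ _ x).bdd_mul
      (measurable_const.mul (measurable_centeredCdf ν)).aestronglyMeasurable
      (ae_of_all _ fun y => (abs_mul_centeredCdf_le ν θ y).trans hθ)
  rw [integral_sub (integrable_one_add_mul_centeredCdf_mul μ ν hθ x _) hR, sub_sub_cancel_left,
    abs_neg, ← Real.norm_eq_abs]
  refine norm_integral_le_of_norm_le (integrable_sq_measureReal_Ioi_div μ _ x)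
    (ae_of_all _ fun y => ?_)
  rw [norm_mul, norm_pow, Real.norm_of_nonneg measureReal_nonneg]
  exact mul_le_of_le_one_left (pow_nonneg measureReal_nonneg 2)
    ((abs_mul_centeredCdf_le ν θ y).trans hθ)

lemma mul_setIntegral_le_setIntegral_fgm (hθ : |θ| ≤ 1) (x : ℝ) :
    (1 - |θ|) * ∫ y in Ioi 0, μ.real (Ioi (x / y)) ∂ν
      ≤ ∫ y in Ioi 0, (1 + θ * centeredCdf ν y) * μ.real (Ioi (x / y)) ∂ν := by
  rw [← integral_const_mul]
  refine integral_mono ((integrable_measureReal_Ioi_div μ _ x).const_mul _)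
    (integrable_one_add_mul_centeredCdf_mul μ ν hθ x _) fun y => ?_
  exact mul_le_mul_of_nonneg_right
    (by linarith [neg_abs_le (θ * centeredCdf ν y), abs_mul_centeredCdf_le ν θ y])
    measureReal_nonneg

lemma isEquivalent_of_eq_setIntegral_fgm (hθ : |θ| < 1) {H : ℝ → ℝ}
    (hH : ∀ᶠ x in atTop, H x = ∫ y in Ioi 0, ((1 + θ * centeredCdf ν y) * μ.real (Ioi (x / y))
      - θ * centeredCdf ν y * μ.real (Ioi (x / y)) ^ 2) ∂ν)
    (hν : ∀ b > 0, (fun x => ν.real (Ioi (b * x))) =o[atTop] H) :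
    H ~[atTop] fun x => ∫ y in Ioi 0, (1 + θ * centeredCdf ν y) * μ.real (Ioi (x / y)) ∂ν := by
  refine isEquivalent_of_abs_sub_le fun ε hε => ?_
  obtain ⟨b, hb, hsq⟩ :=
    exists_setIntegral_sq_measureReal_Ioi_div_le μ ν (mul_pos hε (sub_pos.2 hθ))
  filter_upwards [hH, (hν b hb).bound hε] with x hHx hνx
  rw [Real.norm_eq_abs, Real.norm_eq_abs, abs_of_nonneg measureReal_nonneg] at hνx
  set I := ∫ y in Ioi 0, (1 + θ * centeredCdf ν y) * μ.real (Ioi (x / y)) ∂ν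
  calc |H x - I| ≤ ∫ y in Ioi 0, μ.real (Ioi (x / y)) ^ 2 ∂ν :=
        hHx ▸ abs_setIntegral_fgm_sub_le μ ν hθ.le x
    _ ≤ ε * ((1 - |θ|) * ∫ y in Ioi 0, μ.real (Ioi (x / y)) ∂ν) + ν.real (Ioi (b * x)) := by
        rw [← mul_assoc]; exact hsq x
    _ ≤ ε * (|H x| + |I|) := by
        nlinarith [mul_setIntegral_le_setIntegral_fgm μ ν hθ.le x, le_abs_self I]

end Asymptotics

theorem product_tail_asymp_of_fgm_general {Ω : Type*} [MeasureSpace Ω] [IsProbabilityMeasure (ℙ : Measure Ω)]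
    (X Y : Ω → ℝ) (hXm : Measurable X) (hYm : Measurable Y)
    (hYnonneg : ∀ ω, 0 ≤ Y ω)
    (θ : ℝ) (hθ : |θ| < 1) (hFGM : FGM X Y θ) (hA2 : Assumption2 X Y) :
    (fun x => rvTail (fun ω => X ω * Y ω) x) ~[atTop]
      (fun x => ∫ y in Ioi (0 : ℝ),
        (1 + θ * (rvCdf Y y + rvCdfLeft Y y - 1)) * rvTail X (x / y) ∂(Measure.map Y ℙ)) := by
  have := Measure.isProbabilityMeasure_map (μ := (ℙ : Measure Ω)) hXm.aemeasurable
  have := Measure.isProbabilityMeasure_map (μ := (ℙ : Measure Ω)) hYm.aemeasurable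
  have hcdf (y : ℝ) : rvCdf Y y + rvCdfLeft Y y - 1 = centeredCdf (Measure.map Y ℙ) y := by
    rw [rvCdf_eq_measureReal hYm, rvCdfLeft_eq_measureReal hYm]; rfl
  simp_rw [hcdf, rvTail_eq_measureReal hXm]
  refine isEquivalent_of_eq_setIntegral_fgm _ _ hθ ((eventually_gt_atTop 0).mono fun x hx =>
    hFGM.rvTail_mul_eq_integral hXm hYm hYnonneg hx) fun b hb => ?_
  simpa only [rvTail_eq_measureReal hYm] using hA2 b hb

theorem product_tail_asymp_of_fgm {Ω : Type*} [MeasureSpace Ω] [IsProbabilityMeasure (ℙ : Measure Ω)]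
    (X Y : Ω → ℝ) (hXm : Measurable X) (hYm : Measurable Y)
    (hYnonneg : ∀ ω, 0 ≤ Y ω)
    (hFunb : UnboundedDist X)
    (hXnd : ℙ {ω | X ω = 0} ≠ 1) (hYnd : ℙ {ω | Y ω = 0} ≠ 1)
    (θ : ℝ) (hθ : |θ| < 1) (hFGM : FGM X Y θ) (hA2 : Assumption2 X Y) :
    (fun x => rvTail (fun ω => X ω * Y ω) x) ~[atTop]
      (fun x => ∫ y in Ioi (0 : ℝ),
        (1 + θ * (rvCdf Y y + rvCdfLeft Y y - 1)) * rvTail X (x / y) ∂(Measure.map Y ℙ)) :=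
  product_tail_asymp_of_fgm_general X Y hXm hYm hYnonneg θ hθ hFGM hA2
end
end

section
/- Let X be a real-valued random variable with unbounded distribution F and Y a nonnegative random variable with distribution G, neither degenerate at zero, with X and Y independent, and let H be the distribution of XY. Suppose Assumption 2 holds: Ḡ(bx)=o(H̄(x)) as x→∞ for every constant b>0. If F belongs to the class L(γ) for some γ≥0, then H belongs to L(γ/β_G), where β_G=sup{y:G(y)<1}∈(0,∞] and γ/β_G is understood as 0 when β_G=∞. -/
open MeasureTheory ProbabilityTheory Filter Set Asymptotics

noncomputable section

/-
For `x > 0`, `H̄(x) = ∫_{y > 0} F̄(x/y) G(dy)`. For `y ≥ v` the argument `(x - t)/y` is at least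
`x/y - t/v`, so once `x/y` exceeds the threshold `x₀` of the `L(γ)` estimate,
`F̄((x - t)/y) ≲ e^{γt/v} F̄(x/y)`; taking `v` close to `β_G` (large if `β_G = ∞`) bounds this part
of `H̄(x - t)` by about `e^{γt/β_G} H̄(x)`. The other ranges of `y` are negligible against
`H̄(x) ≥ F̄(x/w) Ḡ(w)`: for `y > x/x₀` the contribution is at most `Ḡ(x/x₀) = o(H̄(x))` by
Assumption 2, and for `y ≤ v` it is at most `F̄((x - t)/v) G(0, v]`, which is small because a
fixed shift divides `F̄` by a large factor when `γ > 0`, and because `G(0, v]` is small for small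
`v` when `γ = 0`. Conversely `Y ≤ β_G` a.s. gives `(x - t)/y ≤ x/y - t/β_G`, whence the matching
lower bound.
-/

open scoped ENNReal Topology

section Equivalence

variable {α : Type*} {l : Filter α}

theorem isEquivalent_const_mul_iff {u v : α → ℝ} {c : ℝ} (hc : 0 < c)
    (hv : ∀ᶠ x in l, 0 ≤ v x) :
    u ~[l] (fun x => c * v x) ↔
      (∀ K > c, ∀ᶠ x in l, u x ≤ K * v x) ∧ (∀ K < c, ∀ᶠ x in l, K * v x ≤ u x) := by
  simp only [IsEquivalent, isLittleO_iff, Pi.sub_apply, Real.norm_eq_abs]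
  refine ⟨fun h => ⟨fun K hK => ?_, fun K hK => ?_⟩, fun ⟨hU, hL⟩ ε hε => ?_⟩
  · filter_upwards [h (div_pos (sub_pos.2 hK) hc), hv] with x hx hvx
    have : (K - c) / c * |c * v x| = (K - c) * v x := by
      rw [abs_of_nonneg (mul_nonneg hc.le hvx)]; field_simp
    linarith [(abs_le.1 (hx.trans this.le)).2]
  · filter_upwards [h (div_pos (sub_pos.2 hK) hc), hv] with x hx hvx
    have : (c - K) / c * |c * v x| = (c - K) * v x := by
      rw [abs_of_nonneg (mul_nonneg hc.le hvx)]; field_simp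
    linarith [(abs_le.1 (hx.trans this.le)).1]
  · have hεc : 0 < ε * c := mul_pos hε hc
    filter_upwards [hU (c + ε * c) (by linarith), hL (c - ε * c) (by linarith), hv]
      with x hxU hxL hvx
    rw [abs_of_nonneg (mul_nonneg hc.le hvx), abs_le]
    constructor <;> nlinarith

theorem ENNReal.ofReal_mul_eq_ofReal_mul_toReal {a : ℝ≥0∞} (ha : a ≠ ∞) (K : ℝ) :
    ENNReal.ofReal K * a = ENNReal.ofReal (K * a.toReal) := by
  rw [ENNReal.ofReal_mul' ENNReal.toReal_nonneg, ENNReal.ofReal_toReal ha]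

theorem isEquivalent_toReal_iff {f g : α → ℝ≥0∞} (hf : ∀ x, f x ≠ ∞) (hg : ∀ x, g x ≠ ∞)
    {c : ℝ} (hc : 0 < c) :
    (fun x => (f x).toReal) ~[l] (fun x => c * (g x).toReal) ↔
      (∀ K > c, ∀ᶠ x in l, f x ≤ ENNReal.ofReal K * g x) ∧
        (∀ K < c, ∀ᶠ x in l, ENNReal.ofReal K * g x ≤ f x) := by
  rw [isEquivalent_const_mul_iff hc (Eventually.of_forall fun _ => ENNReal.toReal_nonneg)]
  refine and_congr (forall₂_congr fun K hK => eventually_congr (Eventually.of_forall fun x => ?_))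
    (forall₂_congr fun K _ => eventually_congr (Eventually.of_forall fun x => ?_))
  · rw [ENNReal.ofReal_mul_eq_ofReal_mul_toReal (hg x), ENNReal.le_ofReal_iff_toReal_le (hf x)
      (mul_nonneg (hc.trans hK).le ENNReal.toReal_nonneg)]
  · rw [ENNReal.ofReal_mul_eq_ofReal_mul_toReal (hg x), ENNReal.ofReal_le_iff_le_toReal (hf x)]

theorem eventually_le_ofReal_mul_of_isLittleO {f g : α → ℝ≥0∞} (hf : ∀ x, f x ≠ ∞)
    (h : (fun x => (f x).toReal) =o[l] fun x => (g x).toReal) {ε : ℝ} (hε : 0 < ε) :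
    ∀ᶠ x in l, f x ≤ ENNReal.ofReal ε * g x := by
  filter_upwards [h.def hε] with x hx
  rw [Real.norm_of_nonneg ENNReal.toReal_nonneg, Real.norm_of_nonneg ENNReal.toReal_nonneg] at hx
  calc f x = ENNReal.ofReal (f x).toReal := (ENNReal.ofReal_toReal (hf x)).symm
    _ ≤ ENNReal.ofReal (ε * (g x).toReal) := ENNReal.ofReal_le_ofReal hx
    _ ≤ ENNReal.ofReal ε * g x := by
      rw [ENNReal.ofReal_mul hε.le]; gcongr; exact ENNReal.ofReal_toReal_le

end Equivalence

section Tails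

variable {μ ν : Measure ℝ}

theorem antitone_measure_Ioi (μ : Measure ℝ) : Antitone fun u => μ (Ioi u) :=
  fun _ _ h => measure_mono (Ioi_subset_Ioi h)

theorem measure_Ioi_eq_zero_of_forall_gt {a : ℝ} (h : ∀ y > a, ν (Ioi y) = 0) :
    ν (Ioi a) = 0 := by
  obtain ⟨u, -, hua, hu⟩ := exists_seq_strictAnti_tendsto a
  have hUnion : Ioi a = ⋃ n, Ioi (u n) := by
    ext z
    simp only [mem_Ioi, mem_iUnion]
    exact ⟨fun hz => (hu.eventually (gt_mem_nhds hz)).exists, fun ⟨n, hn⟩ => (hua n).trans hn⟩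
  rw [hUnion]
  exact measure_iUnion_null fun n => h _ (hua n)

theorem measure_Ioi_sSup_eq_zero (hB : BddAbove {y | ν (Ioi y) ≠ 0}) :
    ν (Ioi (sSup {y | ν (Ioi y) ≠ 0})) = 0 :=
  measure_Ioi_eq_zero_of_forall_gt fun _ hy => not_not.1 (notMem_of_csSup_lt hy hB)

theorem measure_Ioi_ne_zero_of_lt_sSup (hne : {y | ν (Ioi y) ≠ 0}.Nonempty) {y : ℝ}
    (hy : y < sSup {y | ν (Ioi y) ≠ 0}) : ν (Ioi y) ≠ 0 := by
  obtain ⟨z, hz, hyz⟩ := exists_lt_of_lt_csSup hne hy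
  exact fun h0 => hz (measure_mono_null (Ioi_subset_Ioi hyz.le) h0)

theorem measure_Ioi_ne_zero_of_not_bddAbove (hB : ¬BddAbove {y | ν (Ioi y) ≠ 0}) (y : ℝ) :
    ν (Ioi y) ≠ 0 := by
  obtain ⟨z, hz, hyz⟩ := not_bddAbove_iff.1 hB y
  exact fun h0 => hz (measure_mono_null (Ioi_subset_Ioi hyz.le) h0)

theorem eventually_div_add_le_sub_div {v w : ℝ} (hv : 0 < v) (hvw : v < w) (s t : ℝ) :
    ∀ᶠ x in atTop, x / w + s ≤ (x - t) / v := by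
  have hlin : Tendsto (fun x => (v⁻¹ - w⁻¹) * x + -(t / v + s)) atTop atTop :=
    tendsto_atTop_add_const_right _ _
      (tendsto_id.const_mul_atTop (sub_pos.2 (inv_strictAnti₀ hv hvw)))
  filter_upwards [hlin.eventually_ge_atTop 0] with x hx
  have : (x - t) / v - (x / w + s) = (v⁻¹ - w⁻¹) * x + -(t / v + s) := by ring
  linarith

variable {γ : ℝ}

def IsLGammaTail (μ : Measure ℝ) (γ : ℝ) : Prop :=
  ∀ t > 0, (fun x => (μ (Ioi (x - t))).toReal) ~[atTop]
    fun x => Real.exp (γ * t) * (μ (Ioi x)).toReal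

theorem IsLGammaTail.eventually_le [IsFiniteMeasure μ] (h : IsLGammaTail μ γ) {s K : ℝ}
    (hs : 0 < s) (hK : Real.exp (γ * s) < K) :
    ∀ᶠ u in atTop, μ (Ioi (u - s)) ≤ ENNReal.ofReal K * μ (Ioi u) :=
  ((isEquivalent_toReal_iff (fun _ => measure_ne_top _ _) (fun _ => measure_ne_top _ _)
    (Real.exp_pos _)).1 (h s hs)).1 K hK

theorem IsLGammaTail.eventually_ge [IsFiniteMeasure μ] (h : IsLGammaTail μ γ) {s K : ℝ}
    (hs : 0 < s) (hK : K < Real.exp (γ * s)) :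
    ∀ᶠ u in atTop, ENNReal.ofReal K * μ (Ioi u) ≤ μ (Ioi (u - s)) :=
  ((isEquivalent_toReal_iff (fun _ => measure_ne_top _ _) (fun _ => measure_ne_top _ _)
    (Real.exp_pos _)).1 (h s hs)).2 K hK

theorem IsLGammaTail.exists_eventually_measure_Ioi_add_le [IsFiniteMeasure μ] (hγ : 0 < γ)
    (h : IsLGammaTail μ γ) {ε : ℝ} (hε : 0 < ε) :
    ∃ s, ∀ᶠ u in atTop, μ (Ioi (u + s)) ≤ ENNReal.ofReal ε * μ (Ioi u) := by
  obtain ⟨s, hsε, hs⟩ := (((Real.tendsto_exp_atTop.comp (tendsto_id.const_mul_atTop hγ)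
    ).eventually_gt_atTop ε⁻¹).and (eventually_gt_atTop 0)).exists
  refine ⟨s, ?_⟩
  filter_upwards [(tendsto_atTop_add_const_right atTop s tendsto_id).eventually
    (h.eventually_ge hs hsε)] with u hu
  rw [id, add_sub_cancel_right] at hu
  calc μ (Ioi (u + s))
      = ENNReal.ofReal ε * (ENNReal.ofReal ε⁻¹ * μ (Ioi (u + s))) := by
        rw [← mul_assoc, ← ENNReal.ofReal_mul hε.le, mul_inv_cancel₀ hε.ne', ENNReal.ofReal_one,
          one_mul]
    _ ≤ ENNReal.ofReal ε * μ (Ioi u) := by gcongr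

def mulTail (μ ν : Measure ℝ) (s : ℝ) : ℝ≥0∞ :=
  ∫⁻ y in Ioi 0, μ (Ioi (s / y)) ∂ν

theorem measurable_measure_Ioi_div (μ : Measure ℝ) (s : ℝ) :
    Measurable fun y => μ (Ioi (s / y)) :=
  (antitone_measure_Ioi μ).measurable.comp (measurable_const.div measurable_id)

theorem antitone_mulTail : Antitone (mulTail μ ν) := fun _ _ h =>
  setLIntegral_mono' measurableSet_Ioi fun _ hy =>
    antitone_measure_Ioi μ (div_le_div_of_nonneg_right h (le_of_lt hy))

theorem setLIntegral_measure_Ioi_le [IsProbabilityMeasure μ] (A : Set ℝ) (f : ℝ → ℝ) :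
    ∫⁻ y in A, μ (Ioi (f y)) ∂ν ≤ ν A :=
  (setLIntegral_mono measurable_const fun _ _ => prob_le_one).trans_eq (setLIntegral_one A)

theorem mulTail_ne_top [IsProbabilityMeasure μ] [IsFiniteMeasure ν] (s : ℝ) :
    mulTail μ ν s ≠ ∞ :=
  ne_top_of_le_ne_top (measure_ne_top ν _) (setLIntegral_measure_Ioi_le _ _)

theorem measure_Ioi_div_mul_le_mulTail {s w : ℝ} (hs : 0 ≤ s) (hw : 0 < w) :
    μ (Ioi (s / w)) * ν (Ioi w) ≤ mulTail μ ν s :=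
  calc μ (Ioi (s / w)) * ν (Ioi w) = ∫⁻ _ in Ioi w, μ (Ioi (s / w)) ∂ν :=
        (setLIntegral_const _ _).symm
    _ ≤ ∫⁻ y in Ioi w, μ (Ioi (s / y)) ∂ν :=
        setLIntegral_mono (measurable_measure_Ioi_div μ s) fun _ hy =>
          antitone_measure_Ioi μ (div_le_div_of_nonneg_left hs hw (le_of_lt hy))
    _ ≤ mulTail μ ν s := lintegral_mono_set (Ioi_subset_Ioi hw.le)

theorem mulTail_ne_zero (hμ : ∀ u > 0, μ (Ioi u) ≠ 0) {w s : ℝ} (hw : 0 < w)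
    (hνw : ν (Ioi w) ≠ 0) (hs : 0 < s) : mulTail μ ν s ≠ 0 := fun h0 =>
  mul_ne_zero (hμ _ (div_pos hs hw)) hνw
    (le_zero_iff.1 (h0 ▸ measure_Ioi_div_mul_le_mulTail hs.le hw))

theorem mulTail_eq_setLIntegral_Ioc_add {v : ℝ} (hv : 0 ≤ v) (s : ℝ) :
    mulTail μ ν s =
      ∫⁻ y in Ioc 0 v, μ (Ioi (s / y)) ∂ν + ∫⁻ y in Ioi v, μ (Ioi (s / y)) ∂ν := by
  rw [mulTail, ← Ioc_union_Ioi_eq_Ioi hv, lintegral_union measurableSet_Ioi Ioc_disjoint_Ioi_same]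

theorem setLIntegral_Ioc_le {s v : ℝ} (hs : 0 ≤ s) :
    ∫⁻ y in Ioc 0 v, μ (Ioi (s / y)) ∂ν ≤ μ (Ioi (s / v)) * ν (Ioc 0 v) :=
  (setLIntegral_mono measurable_const fun _ hy =>
    antitone_measure_Ioi μ (div_le_div_of_nonneg_left hs hy.1 hy.2)).trans_eq
    (setLIntegral_const _ _)

theorem tendsto_measure_Ioc_nhdsGT (ν : Measure ℝ) [IsFiniteMeasure ν] (a : ℝ) :
    Tendsto (fun v => ν (Ioc a v)) (𝓝[>] a) (𝓝 0) := by
  have hempty : ⋂ r > a, Ioc a r = ∅ := eq_empty_of_forall_notMem fun z hz => by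
    have hz' := mem_iInter₂.1 hz
    have hza : a < z := (hz' (a + 1) (lt_add_one a)).1
    linarith [(hz' ((a + z) / 2) (left_lt_add_div_two.2 hza)).2]
  simpa [hempty, Function.comp_def] using
    tendsto_measure_biInter_gt (μ := ν) (s := fun v => Ioc a v)
      (fun _ _ => measurableSet_Ioc.nullMeasurableSet)
      (fun _ _ _ hij => Ioc_subset_Ioc_right hij) ⟨a + 1, lt_add_one a, measure_ne_top _ _⟩

theorem exists_eventually_setLIntegral_Ioc_le [IsFiniteMeasure ν] {t w : ℝ} (hw0 : 0 < w)
    (hw : ν (Ioi w) ≠ 0) {ε : ℝ} (hε : 0 < ε) :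
    ∃ v > 0, ∀ᶠ x in atTop,
      ∫⁻ y in Ioc 0 v, μ (Ioi ((x - t) / y)) ∂ν ≤ ENNReal.ofReal ε * mulTail μ ν x := by
  have hpos : 0 < ENNReal.ofReal ε * ν (Ioi w) := ENNReal.mul_pos (ENNReal.ofReal_pos.2 hε).ne' hw
  obtain ⟨v, hνv, hv, hvw⟩ :=
    (((tendsto_measure_Ioc_nhdsGT ν 0).eventually (gt_mem_nhds hpos)).and
      (Ioo_mem_nhdsGT hw0)).exists
  refine ⟨v, hv, ?_⟩
  filter_upwards [eventually_div_add_le_sub_div hv hvw 0 t, eventually_ge_atTop t,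
    eventually_ge_atTop 0] with x hlin hxt hx0
  calc ∫⁻ y in Ioc 0 v, μ (Ioi ((x - t) / y)) ∂ν ≤ μ (Ioi ((x - t) / v)) * ν (Ioc 0 v) :=
        setLIntegral_Ioc_le (sub_nonneg.2 hxt)
    _ ≤ μ (Ioi (x / w)) * (ENNReal.ofReal ε * ν (Ioi w)) :=
        mul_le_mul' (antitone_measure_Ioi μ (by simpa using hlin)) hνv.le
    _ = ENNReal.ofReal ε * (μ (Ioi (x / w)) * ν (Ioi w)) := by ring
    _ ≤ ENNReal.ofReal ε * mulTail μ ν x := by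
        gcongr; exact measure_Ioi_div_mul_le_mulTail hx0 hw0

theorem IsLGammaTail.eventually_setLIntegral_Ioc_le [IsFiniteMeasure μ] [IsProbabilityMeasure ν]
    (hγ : 0 < γ) (hL : IsLGammaTail μ γ) {t v w : ℝ} (hv : 0 < v) (hvw : v < w)
    (hw : ν (Ioi w) ≠ 0) {ε : ℝ} (hε : 0 < ε) :
    ∀ᶠ x in atTop,
      ∫⁻ y in Ioc 0 v, μ (Ioi ((x - t) / y)) ∂ν ≤ ENNReal.ofReal ε * mulTail μ ν x := by
  have hw0 : 0 < w := hv.trans hvw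
  obtain ⟨s, hs⟩ := hL.exists_eventually_measure_Ioi_add_le hγ
    (mul_pos hε (ENNReal.toReal_pos hw (measure_ne_top _ _)))
  filter_upwards [(tendsto_id.atTop_div_const hw0).eventually hs,
    eventually_div_add_le_sub_div hv hvw s t, eventually_ge_atTop t, eventually_ge_atTop 0]
    with x hdecay hlin hxt hx0
  calc ∫⁻ y in Ioc 0 v, μ (Ioi ((x - t) / y)) ∂ν ≤ μ (Ioi ((x - t) / v)) * ν (Ioc 0 v) :=
        setLIntegral_Ioc_le (sub_nonneg.2 hxt)
    _ ≤ μ (Ioi (x / w + s)) := (mul_le_of_le_one_right' prob_le_one).trans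
        (antitone_measure_Ioi μ hlin)
    _ ≤ ENNReal.ofReal (ε * (ν (Ioi w)).toReal) * μ (Ioi (x / w)) := hdecay
    _ = ENNReal.ofReal ε * (μ (Ioi (x / w)) * ν (Ioi w)) := by
        rw [ENNReal.ofReal_mul hε.le, ENNReal.ofReal_toReal (measure_ne_top _ _)]; ring
    _ ≤ ENNReal.ofReal ε * mulTail μ ν x := by
        gcongr; exact measure_Ioi_div_mul_le_mulTail hx0 hw0

theorem IsLGammaTail.eventually_setLIntegral_Ioi_le [IsProbabilityMeasure μ] [IsFiniteMeasure ν]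
    (hL : IsLGammaTail μ γ)
    (hA2 : ∀ b > 0, (fun x => (ν (Ioi (b * x))).toReal) =o[atTop]
      fun x => (mulTail μ ν x).toReal)
    {t v K : ℝ} (ht : 0 < t) (hv : 0 < v) (hK : Real.exp (γ * (t / v)) < K) :
    ∀ᶠ x in atTop,
      ∫⁻ y in Ioi v, μ (Ioi ((x - t) / y)) ∂ν ≤ ENNReal.ofReal K * mulTail μ ν x := by
  set K₁ := (Real.exp (γ * (t / v)) + K) / 2
  have hK₁ : Real.exp (γ * (t / v)) < K₁ := left_lt_add_div_two.2 hK
  obtain ⟨u₁, hu₁⟩ := eventually_atTop.1 (hL.eventually_le (div_pos ht hv) hK₁)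
  -- `y ≤ x₀⁻¹ * x` keeps `x / y` above the threshold `u₁`; beyond it Assumption 2 takes over
  set x₀ := max u₁ 1
  have hx₀ : 0 < x₀ := zero_lt_one.trans_le (le_max_right _ _)
  filter_upwards [eventually_le_ofReal_mul_of_isLittleO (fun _ => measure_ne_top _ _)
    (hA2 x₀⁻¹ (inv_pos.2 hx₀)) (sub_pos.2 (add_div_two_lt_right.2 hK))] with x hlarge
  have hmid : ∫⁻ y in Ioc v (x₀⁻¹ * x), μ (Ioi ((x - t) / y)) ∂ν
      ≤ ENNReal.ofReal K₁ * mulTail μ ν x :=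
    calc ∫⁻ y in Ioc v (x₀⁻¹ * x), μ (Ioi ((x - t) / y)) ∂ν
        ≤ ∫⁻ y in Ioc v (x₀⁻¹ * x), ENNReal.ofReal K₁ * μ (Ioi (x / y)) ∂ν := by
          refine setLIntegral_mono (measurable_const.mul (measurable_measure_Ioi_div μ x))
            fun y hy => ?_
          have hy0 : 0 < y := hv.trans hy.1
          have hshift : x / y - t / v ≤ (x - t) / y := by
            rw [sub_div]; exact sub_le_sub_left (div_le_div_of_nonneg_left ht.le hv hy.1.le) _
          have hu : u₁ ≤ x / y := (le_max_left _ _).trans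
            ((le_div_iff₀ hy0).2 ((le_inv_mul_iff₀ hx₀).1 hy.2))
          exact (antitone_measure_Ioi μ hshift).trans (hu₁ _ hu)
      _ = ENNReal.ofReal K₁ * ∫⁻ y in Ioc v (x₀⁻¹ * x), μ (Ioi (x / y)) ∂ν :=
          lintegral_const_mul _ (measurable_measure_Ioi_div μ x)
      _ ≤ ENNReal.ofReal K₁ * mulTail μ ν x := by
          gcongr; exact lintegral_mono_set (Ioc_subset_Ioi_self.trans (Ioi_subset_Ioi hv.le))
  calc ∫⁻ y in Ioi v, μ (Ioi ((x - t) / y)) ∂ν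
      ≤ ∫⁻ y in Ioc v (x₀⁻¹ * x) ∪ Ioi (x₀⁻¹ * x), μ (Ioi ((x - t) / y)) ∂ν :=
        lintegral_mono_set fun y hy => (le_or_gt y (x₀⁻¹ * x)).imp (fun h => ⟨hy, h⟩) id
    _ ≤ ENNReal.ofReal K₁ * mulTail μ ν x + ENNReal.ofReal (K - K₁) * mulTail μ ν x :=
        (lintegral_union_le _ _ _).trans
          (add_le_add hmid ((setLIntegral_measure_Ioi_le _ _).trans hlarge))
    _ = ENNReal.ofReal K * mulTail μ ν x := by
        rw [← add_mul, ← ENNReal.ofReal_add ((Real.exp_pos _).trans hK₁).le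
          (sub_pos.2 (add_div_two_lt_right.2 hK)).le, add_sub_cancel]

theorem IsLGammaTail.eventually_mulTail_sub_le [IsProbabilityMeasure μ] [IsProbabilityMeasure ν]
    (hγ : 0 ≤ γ) (hL : IsLGammaTail μ γ)
    (hA2 : ∀ b > 0, (fun x => (ν (Ioi (b * x))).toReal) =o[atTop]
      fun x => (mulTail μ ν x).toReal)
    {t v w K : ℝ} (ht : 0 < t) (hv : 0 < v) (hvw : v < w) (hw : ν (Ioi w) ≠ 0)
    (hK : Real.exp (γ * (t / v)) < K) :
    ∀ᶠ x in atTop, mulTail μ ν (x - t) ≤ ENNReal.ofReal K * mulTail μ ν x := by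
  set ε := (K - Real.exp (γ * (t / v))) / 2 with hε_def
  have hε : 0 < ε := half_pos (sub_pos.2 hK)
  obtain ⟨v', hv', hexp, hsmall⟩ : ∃ v' > 0, Real.exp (γ * (t / v')) ≤ Real.exp (γ * (t / v)) ∧
      ∀ᶠ x in atTop,
        ∫⁻ y in Ioc 0 v', μ (Ioi ((x - t) / y)) ∂ν ≤ ENNReal.ofReal ε * mulTail μ ν x := by
    rcases hγ.eq_or_lt with rfl | hγ
    -- for `γ = 0` the exponent does not depend on `v'`, which may then be shrunk until
    -- `ν (Ioc 0 v')` is negligible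
    · obtain ⟨v', hv', h⟩ := exists_eventually_setLIntegral_Ioc_le (hv.trans hvw) hw hε
      exact ⟨v', hv', by simp, h⟩
    · exact ⟨v, hv, le_rfl, hL.eventually_setLIntegral_Ioc_le hγ hv hvw hw hε⟩
  filter_upwards [hsmall, hL.eventually_setLIntegral_Ioi_le hA2 ht hv'
    (show Real.exp (γ * (t / v')) < K - ε by linarith [Real.exp_pos (γ * (t / v))])]
    with x hlow hhigh
  calc mulTail μ ν (x - t)
      ≤ ENNReal.ofReal ε * mulTail μ ν x + ENNReal.ofReal (K - ε) * mulTail μ ν x := by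
        rw [mulTail_eq_setLIntegral_Ioc_add hv'.le]; exact add_le_add hlow hhigh
    _ = ENNReal.ofReal K * mulTail μ ν x := by
        rw [← add_mul, ← ENNReal.ofReal_add hε.le (by linarith [Real.exp_pos (γ * (t / v))]),
          add_sub_cancel]

theorem IsLGammaTail.eventually_mulTail_sub_le_of_lt_endpoint [IsProbabilityMeasure μ]
    [IsProbabilityMeasure ν] (hγ : 0 ≤ γ) (hL : IsLGammaTail μ γ)
    (hA2 : ∀ b > 0, (fun x => (ν (Ioi (b * x))).toReal) =o[atTop]
      fun x => (mulTail μ ν x).toReal)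
    {t β K : ℝ} (ht : 0 < t) (hβ : 0 < β) (hlt : ∀ y < β, ν (Ioi y) ≠ 0)
    (hK : Real.exp (γ / β * t) < K) :
    ∀ᶠ x in atTop, mulTail μ ν (x - t) ≤ ENNReal.ofReal K * mulTail μ ν x := by
  rw [div_mul_eq_mul_div, mul_div_assoc] at hK
  have hcont : ContinuousAt (fun v => Real.exp (γ * (t / v))) β := by
    have := hβ.ne'; fun_prop (disch := assumption)
  obtain ⟨v, hvK, hv, hvβ⟩ :=
    (((hcont.eventually (gt_mem_nhds hK)).filter_mono nhdsWithin_le_nhds).and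
      (Ioo_mem_nhdsLT hβ)).exists
  exact hL.eventually_mulTail_sub_le hγ hA2 ht hv (left_lt_add_div_two.2 hvβ)
    (hlt _ (add_div_two_lt_right.2 hvβ)) hvK

theorem IsLGammaTail.eventually_mulTail_sub_le_of_forall_ne_zero [IsProbabilityMeasure μ]
    [IsProbabilityMeasure ν] (hγ : 0 ≤ γ) (hL : IsLGammaTail μ γ)
    (hA2 : ∀ b > 0, (fun x => (ν (Ioi (b * x))).toReal) =o[atTop]
      fun x => (mulTail μ ν x).toReal)
    {t K : ℝ} (ht : 0 < t) (hν : ∀ y, ν (Ioi y) ≠ 0) (hK : 1 < K) :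
    ∀ᶠ x in atTop, mulTail μ ν (x - t) ≤ ENNReal.ofReal K * mulTail μ ν x := by
  have hlim : Tendsto (fun v => Real.exp (γ * (t / v))) atTop (𝓝 1) := by
    simpa using ((tendsto_const_nhds.div_atTop tendsto_id).const_mul γ).rexp
  obtain ⟨v, hvK, hv⟩ := ((hlim.eventually (gt_mem_nhds hK)).and (eventually_gt_atTop 0)).exists
  exact hL.eventually_mulTail_sub_le hγ hA2 ht hv (lt_add_one v) (hν _) hvK

theorem IsLGammaTail.eventually_ofReal_mul_mulTail_le_sub [IsFiniteMeasure μ]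
    (hL : IsLGammaTail μ γ) {t β K : ℝ} (ht : 0 < t) (hβ : 0 < β) (hνβ : ν (Ioi β) = 0)
    (hK : K < Real.exp (γ / β * t)) :
    ∀ᶠ x in atTop, ENNReal.ofReal K * mulTail μ ν x ≤ mulTail μ ν (x - t) := by
  rw [div_mul_eq_mul_div, mul_div_assoc] at hK
  obtain ⟨u₀, hu₀⟩ := eventually_atTop.1 (hL.eventually_ge (div_pos ht hβ) hK)
  have hle : ∀ᵐ y ∂ν, y ≤ β :=
    (measure_eq_zero_iff_ae_notMem.1 hνβ).mono fun _ hy => not_lt.1 hy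
  filter_upwards [(tendsto_id.atTop_div_const hβ).eventually (eventually_ge_atTop u₀),
    eventually_ge_atTop 0] with x hxβ hx0
  unfold mulTail
  rw [← lintegral_const_mul _ (measurable_measure_Ioi_div μ x)]
  refine lintegral_mono_ae ?_
  filter_upwards [ae_restrict_mem measurableSet_Ioi, ae_restrict_of_ae hle] with y hy0 hyβ
  have hshift : (x - t) / y ≤ x / y - t / β := by
    rw [sub_div]; exact sub_le_sub_left (div_le_div_of_nonneg_left ht.le hy0 hyβ) _
  exact (hu₀ _ (hxβ.trans (div_le_div_of_nonneg_left hx0 hy0 hyβ))).trans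
    (antitone_measure_Ioi μ hshift)

theorem ofReal_mul_mulTail_le_sub {K t : ℝ} (hK : K ≤ 1) (ht : 0 ≤ t) (x : ℝ) :
    ENNReal.ofReal K * mulTail μ ν x ≤ mulTail μ ν (x - t) :=
  (mul_le_of_le_one_left' (ENNReal.ofReal_le_one.2 hK)).trans (antitone_mulTail (sub_le_self x ht))

end Tails

section RandomVariables

variable {Ω : Type*}

theorem measure_lt_mul_eq_mulTail [MeasurableSpace Ω] {P : Measure Ω} [IsFiniteMeasure P]
    {X Y : Ω → ℝ} (hX : Measurable X) (hY : Measurable Y) (hY0 : ∀ ω, 0 ≤ Y ω)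
    (hXY : IndepFun X Y P) {s : ℝ} (hs : 0 < s) :
    P {ω | s < X ω * Y ω} = mulTail (P.map X) (P.map Y) s := by
  have hS : MeasurableSet {p : ℝ × ℝ | s < p.2 * p.1} :=
    measurableSet_lt measurable_const (measurable_snd.mul measurable_fst)
  have hae : ∀ᵐ y ∂(P.map Y),
      P.map X {x | s < x * y} = (Ioi 0).indicator (fun y => P.map X (Ioi (s / y))) y := by
    filter_upwards [(ae_map_iff hY.aemeasurable measurableSet_Ici).2 (Eventually.of_forall hY0)]
      with y (hy : 0 ≤ y)
    rcases hy.eq_or_lt with rfl | hy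
    · simp [not_lt.2 hs.le]
    · rw [indicator_of_mem (mem_Ioi.2 hy)]
      congr 1
      ext x
      exact (div_lt_iff₀ hy).symm
  calc P {ω | s < X ω * Y ω} = P.map (fun ω => (Y ω, X ω)) {p | s < p.2 * p.1} :=
        (Measure.map_apply (hY.prodMk hX) hS).symm
    _ = ∫⁻ y, P.map X {x | s < x * y} ∂(P.map Y) := by
        rw [(indepFun_iff_map_prod_eq_prod_map_map hY.aemeasurable hX.aemeasurable).1 hXY.symm,
          Measure.prod_apply hS]
        rfl
    _ = mulTail (P.map X) (P.map Y) s := by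
        rw [lintegral_congr_ae hae, lintegral_indicator measurableSet_Ioi]
        rfl

theorem exists_pos_measure_map_Ioi_ne_zero [MeasurableSpace Ω] {P : Measure Ω}
    [IsProbabilityMeasure P] {Y : Ω → ℝ} (hY : Measurable Y) (hY0 : ∀ ω, 0 ≤ Y ω)
    (hY1 : P {ω | Y ω = 0} ≠ 1) : ∃ w > 0, P.map Y (Ioi w) ≠ 0 := by
  by_contra! h
  have h0 := measure_Ioi_eq_zero_of_forall_gt h
  rw [Measure.map_apply hY measurableSet_Ioi, ← prob_compl_eq_one_iff (hY measurableSet_Ioi)] at h0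
  refine hY1 (Eq.trans ?_ h0)
  congr 1
  ext ω
  simp [le_antisymm_iff, hY0 ω]

theorem rvTail_eq_toReal_map [MeasureSpace Ω] {Z : Ω → ℝ} (hZ : Measurable Z) (u : ℝ) :
    rvTail Z u = (Measure.map Z ℙ (Ioi u)).toReal := by
  rw [rvTail, Measure.map_apply hZ measurableSet_Ioi]
  rfl

theorem UnboundedDist.measure_map_Ioi_ne_zero [MeasureSpace Ω] {Z : Ω → ℝ} (h : UnboundedDist Z)
    (hZ : Measurable Z) {u : ℝ} (hu : 0 < u) : Measure.map Z ℙ (Ioi u) ≠ 0 := by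
  have := h u hu
  rw [rvTail_eq_toReal_map hZ] at this
  exact (ENNReal.toReal_pos_iff.1 this).1.ne'

theorem MemLGamma.isLGammaTail [MeasureSpace Ω] {Z : Ω → ℝ} {γ : ℝ} (h : MemLGamma Z γ)
    (hZ : Measurable Z) : IsLGammaTail (Measure.map Z ℙ) γ := fun t ht => by
  simpa only [rvTail_eq_toReal_map hZ] using h.2 t ht

theorem IsLGammaTail.mulTail_sub_isEquivalent [MeasureSpace Ω]
    [IsProbabilityMeasure (ℙ : Measure Ω)] {μ : Measure ℝ} [IsProbabilityMeasure μ] {Y : Ω → ℝ}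
    (hY : Measurable Y) {γ : ℝ} (hγ : 0 ≤ γ) (hL : IsLGammaTail μ γ)
    (hA2 : ∀ b > 0, (fun x => (Measure.map Y ℙ (Ioi (b * x))).toReal) =o[atTop]
      fun x => (mulTail μ (Measure.map Y ℙ) x).toReal)
    {w : ℝ} (hw : 0 < w) (hνw : Measure.map Y ℙ (Ioi w) ≠ 0) {t : ℝ} (ht : 0 < t) :
    (fun x => (mulTail μ (Measure.map Y ℙ) (x - t)).toReal) ~[atTop]
      fun x => Real.exp (gammaOverBeta Y γ * t) * (mulTail μ (Measure.map Y ℙ) x).toReal := by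
  set ν := Measure.map Y ℙ
  have : IsProbabilityMeasure ν := Measure.isProbabilityMeasure_map hY.aemeasurable
  have hS : {y | 0 < rvTail Y y} = {y | ν (Ioi y) ≠ 0} := by
    ext y
    change 0 < rvTail Y y ↔ ν (Ioi y) ≠ 0
    rw [rvTail_eq_toReal_map hY, ENNReal.toReal_pos_iff, pos_iff_ne_zero]
    exact and_iff_left (measure_lt_top _ _)
  rw [isEquivalent_toReal_iff (fun x => mulTail_ne_top (x - t)) mulTail_ne_top (Real.exp_pos _),
    gammaOverBeta, hS]
  split_ifs with hB
  · have hβ : 0 < sSup {y | ν (Ioi y) ≠ 0} := hw.trans_le (le_csSup hB hνw)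
    exact ⟨fun K hK => hL.eventually_mulTail_sub_le_of_lt_endpoint hγ hA2 ht hβ
        (fun _ => measure_Ioi_ne_zero_of_lt_sSup ⟨w, hνw⟩) hK,
      fun K hK => hL.eventually_ofReal_mul_mulTail_le_sub ht hβ (measure_Ioi_sSup_eq_zero hB) hK⟩
  · rw [zero_mul, Real.exp_zero]
    exact ⟨fun K hK => hL.eventually_mulTail_sub_le_of_forall_ne_zero hγ hA2 ht
        (measure_Ioi_ne_zero_of_not_bddAbove hB) hK,
      fun K hK => Eventually.of_forall (ofReal_mul_mulTail_le_sub hK.le ht.le)⟩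

end RandomVariables

theorem product_memL_of_indep_general {Ω : Type*} [MeasureSpace Ω] [IsProbabilityMeasure (ℙ : Measure Ω)]
    (X Y : Ω → ℝ) (hXm : Measurable X) (hYm : Measurable Y)
    (hYnonneg : ∀ ω, 0 ≤ Y ω)
    (hYnd : ℙ {ω | Y ω = 0} ≠ 1)
    (hInd : IndepFun X Y ℙ) (hA2 : Assumption2 X Y)
    (γ : ℝ) (hγ : 0 ≤ γ) (hFL : MemLGamma X γ) :
    MemLGamma (fun ω => X ω * Y ω) (gammaOverBeta Y γ) := by
  have : IsProbabilityMeasure (Measure.map X ℙ) := Measure.isProbabilityMeasure_map hXm.aemeasurable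
  have hH : ∀ s > 0, rvTail (fun ω => X ω * Y ω) s =
      (mulTail (Measure.map X ℙ) (Measure.map Y ℙ) s).toReal := fun s hs =>
    congrArg ENNReal.toReal (measure_lt_mul_eq_mulTail hXm hYm hYnonneg hInd hs)
  obtain ⟨w, hw, hνw⟩ := exists_pos_measure_map_Ioi_ne_zero hYm hYnonneg hYnd
  refine ⟨fun s hs => ?_, fun t ht => ?_⟩
  · rw [hH s hs]
    exact ENNReal.toReal_pos
      (mulTail_ne_zero (fun _ => hFL.1.measure_map_Ioi_ne_zero hXm) hw hνw hs) (mulTail_ne_top s)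
  have hA2' : ∀ b > 0, (fun x => (Measure.map Y ℙ (Ioi (b * x))).toReal) =o[atTop]
      fun x => (mulTail (Measure.map X ℙ) (Measure.map Y ℙ) x).toReal := fun b hb =>
    (hA2 b hb).congr' (Eventually.of_forall fun x => rvTail_eq_toReal_map hYm _)
      ((eventually_gt_atTop 0).mono hH)
  have key := (hFL.isLGammaTail hXm).mulTail_sub_isEquivalent hYm hγ hA2' hw hνw ht
  exact (key.congr_left ((eventually_gt_atTop t).mono fun x hx =>
    (hH _ (sub_pos.2 hx)).symm)).congr_right
    ((eventually_gt_atTop 0).mono fun x hx =>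
      congrArg (Real.exp (gammaOverBeta Y γ * t) * ·) (hH x hx).symm)

theorem product_memL_of_indep {Ω : Type*} [MeasureSpace Ω] [IsProbabilityMeasure (ℙ : Measure Ω)]
    (X Y : Ω → ℝ) (hXm : Measurable X) (hYm : Measurable Y)
    (hYnonneg : ∀ ω, 0 ≤ Y ω)
    (hFunb : UnboundedDist X)
    (hXnd : ℙ {ω | X ω = 0} ≠ 1) (hYnd : ℙ {ω | Y ω = 0} ≠ 1)
    (hInd : IndepFun X Y ℙ) (hA2 : Assumption2 X Y)
    (γ : ℝ) (hγ : 0 ≤ γ) (hFL : MemLGamma X γ) :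
    MemLGamma (fun ω => X ω * Y ω) (gammaOverBeta Y γ) :=
  product_memL_of_indep_general X Y hXm hYm hYnonneg hYnd hInd hA2 γ hγ hFL
end
end
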